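/- arXiv:2211.04511 — 10 statements merged into one kernel-verified Lean document; each statement's English description precedes it below -/
import Mathlib

section
/- Let q be a prime power and F_q the finite field with q elements. Let A ⊆ F_q be a subset with |A| > 2 and let m be a nonnegative integer with m ≤ |A|. Define L_A(m) = Σ_{α∈A} α^m · ∏_{β∈F_q∖A} (α − β). Then L_A(m) = 0 if m ≤ |A| − 2; L_A(m) = −1 if m = |A| − 1; and L_A(m) = −Σ_{α∈A} α if m = |A|. -/
open Polynomial

noncomputable section

variable {F : Type*} [Field F]

/-- The dual of a code `C ⊆ F^N` under the standard bilinear form. -/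
def dualCode {N : ℕ} (C : Set (Fin N → F)) : Set (Fin N → F) :=
  { x | ∀ c ∈ C, ∑ i, x i * c i = 0 }

/-- A code is self-orthogonal if it is contained in its dual. -/
def selfOrthogonal {N : ℕ} (C : Set (Fin N → F)) : Prop := C ⊆ dualCode C

/-- The Schur square of a code: the linear span of coordinatewise products of codewords. -/
def schurSq {N : ℕ} (C : Set (Fin N → F)) : Set (Fin N → F) :=
  ↑(Submodule.span F {x : Fin N → F | ∃ c1 ∈ C, ∃ c2 ∈ C, x = c1 * c2})

/-- The dimension of (the span of) a code. -/
def codeDim {N : ℕ} (C : Set (Fin N → F)) : ℕ :=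
  Module.finrank F (Submodule.span F C)

/-- The minimum Hamming weight of a nonzero codeword. -/
def minWt {N : ℕ} [DecidableEq F] (C : Set (Fin N → F)) : ℕ :=
  sInf {w | ∃ c ∈ C, c ≠ 0 ∧ hammingNorm c = w}

/-- A code of length `N` is MDS if its minimum distance is `N - dim + 1`. -/
def isMDS {N : ℕ} [DecidableEq F] (C : Set (Fin N → F)) : Prop :=
  minWt C = N - codeDim C + 1

/-- A code of length `N` is almost MDS (AMDS) if its minimum distance is `N - dim`. -/
def isAMDS {N : ℕ} [DecidableEq F] (C : Set (Fin N → F)) : Prop :=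
  minWt C = N - codeDim C

/-- A code is near MDS (NMDS) if both it and its dual are AMDS. -/
def isNMDS {N : ℕ} [DecidableEq F] (C : Set (Fin N → F)) : Prop :=
  isAMDS C ∧ isAMDS (dualCode C)

/-- A code of odd length `N` is almost self-dual if it is self-orthogonal of
dimension `(N-1)/2`. -/
def almostSelfDual {N : ℕ} (C : Set (Fin N → F)) : Prop :=
  selfOrthogonal C ∧ Odd N ∧ codeDim C = (N - 1) / 2

/-- `Nsub t b D` is the number of `t`-element subsets of `D` whose sum is `b`. -/
def Nsub (t : ℕ) (b : F) (D : Set F) : ℕ :=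
  Set.ncard {A : Finset F | ↑A ⊆ D ∧ A.card = t ∧ ∑ x ∈ A, x = b}

/-- The (+)-twisted generalized Reed–Solomon code `C_{k,n}(α,v,η)`.  The twisted
polynomial space `V_{k,1,k-1,η}` consists exactly of the polynomials `f` with
`deg f ≤ k` and `f_k = η f_{k-1}`. -/
def TGRS (k n : ℕ) (α v : Fin n → F) (η : F) : Set (Fin n → F) :=
  { c | ∃ f : F[X], f.natDegree ≤ k ∧ f.coeff k = η * f.coeff (k - 1) ∧
      c = fun j => v j * f.eval (α j) }

/-- The (+)-extended twisted generalized Reed–Solomon code `C_{k,n}(α,v,η,∞)`. -/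
def ETGRS (k n : ℕ) (α v : Fin n → F) (η : F) : Set (Fin (n + 1) → F) :=
  { c | ∃ f : F[X], f.natDegree ≤ k ∧ f.coeff k = η * f.coeff (k - 1) ∧
      c = Fin.snoc (fun j => v j * f.eval (α j)) (f.coeff (k - 1)) }

/-- The generalized Reed–Solomon code `GRS_{k,N}(β,w)`. -/
def GRS (k N : ℕ) (β w : Fin N → F) : Set (Fin N → F) :=
  { c | ∃ f : F[X], f.natDegree ≤ k - 1 ∧ c = fun j => w j * f.eval (β j) }

/-- The extended generalized Reed–Solomon code `GRS_{k,N}(β,w,∞)`. -/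
def EGRS (k N : ℕ) (β w : Fin N → F) : Set (Fin (N + 1) → F) :=
  { c | ∃ f : F[X], f.natDegree ≤ k - 1 ∧
      c = Fin.snoc (fun j => w j * f.eval (β j)) (f.coeff (k - 1)) }

end

section Aux
set_option linter.unusedSectionVars false
open Polynomial Finset

variable {F : Type*} [Field F] [Fintype F] [DecidableEq F]

lemma aux_prod_nonzero : ∏ c ∈ (Finset.univ.erase (0:F)), c = -1 := by
  have h1 : (∏ x : Fˣ, x) = (-1 : Fˣ) := FiniteField.prod_univ_units_id_eq_neg_one
  have h2 : (∏ x : Fˣ, (x : F)) = -1 := by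
    have := congrArg (Units.coeHom F) h1
    rw [map_prod] at this
    simpa using this
  rw [← h2]
  rw [Finset.prod_subtype (p := fun x : F => x ≠ 0) (Finset.univ.erase (0:F)) (by simp) (fun x => x)]
  exact (Fintype.prod_equiv unitsEquivNeZero (fun x : Fˣ => (x : F))
    (fun a : {a : F // a ≠ 0} => (a : F)) (fun x => rfl)).symm

lemma aux_prod_compl (A : Finset F) {a : F} (ha : a ∈ A) :
    ∏ b ∈ Aᶜ, (a - b) = -(∏ b ∈ A.erase a, (a - b))⁻¹ := by
  have hP2 : (∏ b ∈ A.erase a, (a - b)) ≠ 0 :=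
    Finset.prod_ne_zero_iff.2 fun b hb =>
      sub_ne_zero.2 fun h => (Finset.mem_erase.1 hb).1 h.symm
  have hdisj : Disjoint Aᶜ (A.erase a) :=
    Finset.disjoint_left.2 fun b hb hb' =>
      (Finset.mem_compl.1 hb) (Finset.mem_of_mem_erase hb')
  have hsplit : (∏ b ∈ Aᶜ, (a - b)) * ∏ b ∈ A.erase a, (a - b) =
      ∏ b ∈ Finset.univ.erase a, (a - b) := by
    rw [← Finset.prod_union hdisj]
    apply Finset.prod_congr _ fun _ _ => rfl
    ext b
    by_cases hb : b ∈ A <;> by_cases hba : b = a <;>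
      simp [Finset.mem_erase, Finset.mem_union, hb, hba, ha]
  have hval : ∏ b ∈ Finset.univ.erase a, (a - b) = -1 := by
    rw [← aux_prod_nonzero (F := F)]
    apply Finset.prod_nbij' (fun b => a - b) (fun c => a - c)
    · intro b hb
      simp only [Finset.mem_erase, Finset.mem_univ, and_true] at hb ⊢
      exact sub_ne_zero.2 fun h => hb h.symm
    · intro c hc
      simp only [Finset.mem_erase, Finset.mem_univ, and_true] at hc ⊢
      intro h
      exact hc (by linear_combination -h)
    · intro b _; ring
    · intro c _; ring
    · intro b _; rfl
  have key : (∏ b ∈ Aᶜ, (a - b)) = (-1) / ∏ b ∈ A.erase a, (a - b) := by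
    rw [eq_div_iff hP2]; exact hsplit.trans hval
  rw [key, neg_div, one_div]

lemma aux_coeff_basis (A : Finset F) {a : F} (ha : a ∈ A) :
    (Lagrange.basis A id a).coeff (A.card - 1) = Lagrange.nodalWeight A id a := by
  have hinj : Set.InjOn (id : F → F) A := Function.injective_id.injOn
  have hnd : (Lagrange.basis A id a).natDegree = A.card - 1 :=
    Lagrange.natDegree_basis hinj ha
  rw [← hnd, ← Polynomial.leadingCoeff]
  unfold Lagrange.basis Lagrange.nodalWeight
  rw [Polynomial.leadingCoeff_prod]
  refine Finset.prod_congr rfl fun j hj => ?_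
  rw [Lagrange.basisDivisor, Polynomial.leadingCoeff_mul, Polynomial.leadingCoeff_C,
    (Polynomial.monic_X_sub_C _).leadingCoeff, mul_one]

lemma aux_coeff_interp (A : Finset F) (r : F → F) :
    (Lagrange.interpolate A id r).coeff (A.card - 1) =
      ∑ a ∈ A, r a * Lagrange.nodalWeight A id a := by
  rw [Lagrange.interpolate_apply, Polynomial.finset_sum_coeff]
  exact Finset.sum_congr rfl fun a ha => by
    rw [Polynomial.coeff_C_mul, aux_coeff_basis A ha]

lemma aux_key (A : Finset F) (hA : 0 < A.card) (m : ℕ) (hm : m ≤ A.card) :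
    ∑ a ∈ A, a ^ m * Lagrange.nodalWeight A id a =
      if m = A.card then ∑ a ∈ A, a
      else if m = A.card - 1 then 1 else 0 := by
  have hinj : Set.InjOn (id : F → F) A := Function.injective_id.injOn
  rcases eq_or_lt_of_le hm with heq | hlt
  · -- m = card
    rw [if_pos heq]
    set f : F[X] := X ^ A.card - Lagrange.nodal A id with hf
    have hdeg : f.degree < A.card := by
      have h1 : (X ^ A.card : F[X]).degree = (Lagrange.nodal A id).degree := by
        rw [Polynomial.degree_X_pow, Lagrange.degree_nodal]
      have h2 := Polynomial.degree_sub_lt h1 (pow_ne_zero _ Polynomial.X_ne_zero)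
        (by rw [Polynomial.leadingCoeff_X_pow, Lagrange.nodal_monic.leadingCoeff])
      rw [Polynomial.degree_X_pow] at h2
      exact h2
    have hinterp := Lagrange.eq_interpolate (f := f) hinj hdeg
    have heval : ∀ a ∈ A, f.eval a = a ^ m := by
      intro a ha
      have h0 : Polynomial.eval a (Lagrange.nodal A id) = 0 :=
        Lagrange.eval_nodal_at_node (v := (id : F → F)) ha
      rw [hf, Polynomial.eval_sub, Polynomial.eval_pow, Polynomial.eval_X, h0, sub_zero, heq]
    have hco : f.coeff (A.card - 1) = ∑ a ∈ A, a ^ m * Lagrange.nodalWeight A id a := by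
      conv_lhs => rw [hinterp]
      rw [aux_coeff_interp]
      exact Finset.sum_congr rfl fun a ha => by rw [id_eq, heval a ha]
    rw [← hco, hf, Polynomial.coeff_sub]
    have hcard : A.card - 1 < A.card := Nat.sub_lt hA one_pos
    rw [Polynomial.coeff_X_pow, if_neg hcard.ne]
    have hnz : 0 < (Lagrange.nodal A id).natDegree := by
      rw [Lagrange.natDegree_nodal]; omega
    rw [show (Lagrange.nodal A id).coeff (A.card - 1) = (Lagrange.nodal A id).nextCoeff by
      rw [Polynomial.nextCoeff_of_natDegree_pos hnz, Lagrange.natDegree_nodal]]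
    rw [Lagrange.nodal_eq, Polynomial.prod_X_sub_C_nextCoeff]
    simp
  · -- m < card
    rw [if_neg hlt.ne]
    have hdeg : (X ^ m : F[X]).degree < A.card := by
      rw [Polynomial.degree_X_pow]
      exact_mod_cast hlt
    have hinterp := Lagrange.eq_interpolate (f := (X ^ m : F[X])) hinj hdeg
    have hco : (X ^ m : F[X]).coeff (A.card - 1)
        = ∑ a ∈ A, a ^ m * Lagrange.nodalWeight A id a := by
      conv_lhs => rw [hinterp]
      rw [aux_coeff_interp]
      exact Finset.sum_congr rfl fun a ha => by simp [Polynomial.eval_pow]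
    rw [← hco, Polynomial.coeff_X_pow]
    by_cases h : m = A.card - 1
    · rw [if_pos h, if_pos h.symm]
    · rw [if_neg h, if_neg (fun hh => h hh.symm)]

end Aux

/-- Lemma on power sums over subsets of a finite field. -/
theorem stmt0 {F : Type*} [Field F] [Fintype F] [DecidableEq F]
    (A : Finset F) (hA : 2 < A.card) (m : ℕ) (hm : m ≤ A.card) :
    ∑ a ∈ A, a ^ m * ∏ b ∈ Aᶜ, (a - b) =
      if m ≤ A.card - 2 then 0
      else if m = A.card - 1 then -1
      else -∑ a ∈ A, a := by
  have h3 : 0 < A.card := by omega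
  have hrw : ∀ a ∈ A, a ^ m * ∏ b ∈ Aᶜ, (a - b)
      = -(a ^ m * Lagrange.nodalWeight A id a) := by
    intro a ha
    rw [aux_prod_compl A ha, Lagrange.nodalWeight, ← Finset.prod_inv_distrib]
    simp only [id_eq]
    ring
  rw [Finset.sum_congr rfl hrw, Finset.sum_neg_distrib, aux_key A h3 m hm]
  by_cases h1 : m = A.card
  · rw [if_pos h1, if_neg (by omega), if_neg (by omega)]
  · by_cases h2 : m = A.card - 1
    · rw [if_neg h1, if_pos h2, if_neg (by omega), if_pos h2]
    · rw [if_neg h1, if_neg h2, if_pos (by omega)]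
      simp
end

section
/- Let 2 ≤ k < n ≤ q, let α = (α_1,…,α_n) ∈ F_q^n have pairwise distinct entries, let v = (v_1,…,v_n) with all v_i ∈ F_q^*, let η ∈ F_q^*, and for j = 1,…,n set u_j = −∏_{1≤i≤n, i≠j} (α_j − α_i)^{−1}. Then the dual code of the (+)-ETGRS code C_{k,n}(α,v,η,∞) equals { ((u_1/v_1)·g(α_1), …, (u_n/v_n)·g(α_n), η·g_{n−k−1} + (1 + η·S_α)·g_{n−k}) : g ∈ F_q[x], deg g ≤ n−k }. -/
open Polynomial

section Helpers
open Finset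
variable {F : Type*} [Field F]

lemma coeff_mul_of_le' (p q : F[X]) (a b : ℕ) (hp : p.natDegree ≤ a) (hq : q.natDegree ≤ b) :
    (p * q).coeff (a + b) = p.coeff a * q.coeff b := by
  rw [Polynomial.coeff_mul]
  apply Finset.sum_eq_single_of_mem (a, b) (by simp)
  rintro ⟨i, j⟩ hij hne
  rw [Finset.HasAntidiagonal.mem_antidiagonal] at hij
  have hne' : i ≠ a ∨ j ≠ b := by
    by_contra hc
    push_neg at hc
    exact hne (by simp [hc.1, hc.2])
  rcases lt_or_ge a i with h | h
  · rw [Polynomial.coeff_eq_zero_of_natDegree_lt (lt_of_le_of_lt hp h), zero_mul]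
  · have : b < j := by omega
    rw [Polynomial.coeff_eq_zero_of_natDegree_lt (lt_of_le_of_lt hq this), mul_zero]

lemma coeff_mul_pred' (p q : F[X]) (a b : ℕ) (hp : p.natDegree ≤ a + 1) (hq : q.natDegree ≤ b + 1) :
    (p * q).coeff (a + b + 1) = p.coeff (a + 1) * q.coeff b + p.coeff a * q.coeff (b + 1) := by
  rw [Polynomial.coeff_mul]
  have h1 : ((a + 1, b) : ℕ × ℕ) ∈ Finset.HasAntidiagonal.antidiagonal (a + b + 1) := by
    rw [Finset.HasAntidiagonal.mem_antidiagonal]; omega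
  rw [← Finset.add_sum_erase _ _ h1]
  congr 1
  apply Finset.sum_eq_single_of_mem (a, b + 1)
  · rw [Finset.mem_erase, Finset.HasAntidiagonal.mem_antidiagonal]
    constructor
    · simp only [Ne, Prod.mk.injEq, not_and]; omega
    · omega
  rintro ⟨i, j⟩ hij hne
  rw [Finset.mem_erase, Finset.HasAntidiagonal.mem_antidiagonal] at hij
  have hne1 : i ≠ a + 1 ∨ j ≠ b := by
    by_contra hc; push_neg at hc; exact hij.1 (by simp [hc.1, hc.2])
  have hne2 : i ≠ a ∨ j ≠ b + 1 := by
    by_contra hc; push_neg at hc; exact hne (by simp [hc.1, hc.2])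
  rcases lt_or_ge (a + 1) i with h | h
  · rw [Polynomial.coeff_eq_zero_of_natDegree_lt (lt_of_le_of_lt hp h), zero_mul]
  · have : b + 1 < j := by omega
    rw [Polynomial.coeff_eq_zero_of_natDegree_lt (lt_of_le_of_lt hq this), mul_zero]


lemma key_sum' {n : ℕ} (hn : 1 ≤ n) (α : Fin n → F) (hα : Function.Injective α)
    (u : Fin n → F)
    (hu : ∀ j, u j = -∏ i ∈ Finset.univ.erase j, (α j - α i)⁻¹)
    (h : F[X]) (hh : h.natDegree ≤ n) :
    ∑ j, u j * h.eval (α j) = -(h.coeff (n - 1) + (∑ i, α i) * h.coeff n) := by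
  set P : F[X] := ∏ j : Fin n, (X - C (α j)) with hP
  have hPmonic : P.Monic := monic_prod_of_monic _ _ fun _ _ => monic_X_sub_C _
  have hPdeg : P.natDegree = n := by
    rw [hP, natDegree_prod_of_monic _ _ fun _ _ => monic_X_sub_C _]
    simp [natDegree_X_sub_C]
  have hPn : P.coeff n = 1 := by
    have := hPmonic.coeff_natDegree
    rwa [hPdeg] at this
  have hPpred : P.coeff (n - 1) = -∑ i, α i := by
    have := Polynomial.prod_X_sub_C_coeff_card_pred Finset.univ α
      (by simp [Finset.card_univ]; omega)
    simpa [Finset.card_univ] using this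
  have hPeval : ∀ j, P.eval (α j) = 0 := by
    intro j
    rw [hP, eval_prod]
    exact Finset.prod_eq_zero (Finset.mem_univ j) (by simp)
  set r : F[X] := h - C (h.coeff n) * P with hr
  have hrdeg : r.degree < (n : ℕ) := by
    rw [Polynomial.degree_lt_iff_coeff_zero]
    intro m hm
    rw [hr, Polynomial.coeff_sub, Polynomial.coeff_C_mul]
    rcases eq_or_lt_of_le hm with heq | hlt
    · rw [← heq, hPn, mul_one, sub_self]
    · rw [Polynomial.coeff_eq_zero_of_natDegree_lt (lt_of_le_of_lt hh hlt),
        Polynomial.coeff_eq_zero_of_natDegree_lt (show P.natDegree < m by omega)]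
      ring
  have hreval : ∀ j, r.eval (α j) = h.eval (α j) := by
    intro j
    rw [hr]
    simp [hPeval j]
  have hinterp : r = Lagrange.interpolate Finset.univ α fun j => r.eval (α j) :=
    Lagrange.eq_interpolate hα.injOn (by simpa [Finset.card_univ] using hrdeg)
  have hbasis : ∀ j, (Lagrange.basis Finset.univ α j).coeff (n - 1) =
      ∏ i ∈ Finset.univ.erase j, (α j - α i)⁻¹ := by
    intro j
    have hcard : #(Finset.univ.erase j) = n - 1 := by
      rw [Finset.card_erase_of_mem (Finset.mem_univ j)]
      simp [Finset.card_univ]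
    rw [Lagrange.basis, show n - 1 = #(Finset.univ.erase j) * 1 by omega]
    rw [Polynomial.coeff_prod_of_natDegree_le]
    · apply Finset.prod_congr rfl
      intro i hi
      rw [Lagrange.basisDivisor, Polynomial.coeff_C_mul]
      simp
    · intro i hi
      rw [Lagrange.basisDivisor]
      apply le_trans (Polynomial.natDegree_mul_le)
      simp [natDegree_X_sub_C]
  have hcoeff : r.coeff (n - 1) = ∑ j, h.eval (α j) * ∏ i ∈ Finset.univ.erase j, (α j - α i)⁻¹ := by
    conv_lhs => rw [hinterp]
    rw [Lagrange.interpolate_apply, Polynomial.finset_sum_coeff]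
    apply Finset.sum_congr rfl
    intro j _
    rw [Polynomial.coeff_C_mul, hbasis j, hreval j]
  have hcoeff2 : r.coeff (n - 1) = h.coeff (n - 1) + (∑ i, α i) * h.coeff n := by
    rw [hr, Polynomial.coeff_sub, Polynomial.coeff_C_mul, hPpred]
    ring
  calc ∑ j, u j * h.eval (α j)
      = -∑ j, h.eval (α j) * ∏ i ∈ Finset.univ.erase j, (α j - α i)⁻¹ := by
        rw [← Finset.sum_neg_distrib]
        apply Finset.sum_congr rfl
        intro j _
        rw [hu j]; ring
    _ = -(h.coeff (n - 1) + (∑ i, α i) * h.coeff n) := by rw [← hcoeff, hcoeff2]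

end Helpers

/-- parity check matrix / dual code of the (+)-ETGRS code. -/
theorem stmt1 {F : Type*} [Field F] [Fintype F] [DecidableEq F] {k n : ℕ}
    (hk : 2 ≤ k) (hkn : k < n) (hn : n ≤ Fintype.card F)
    (α : Fin n → F) (hα : Function.Injective α)
    (v : Fin n → F) (hv : ∀ i, v i ≠ 0)
    (η : F) (hη : η ≠ 0)
    (u : Fin n → F)
    (hu : ∀ j, u j = -∏ i ∈ Finset.univ.erase j, (α j - α i)⁻¹) :
    dualCode (ETGRS k n α v η) =
      { x | ∃ g : F[X], g.natDegree ≤ n - k ∧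
          x = Fin.snoc (fun j => u j / v j * g.eval (α j))
                (η * g.coeff (n - k - 1) + (1 + η * ∑ i, α i) * g.coeff (n - k)) } := by
  have hn1 : 1 ≤ n := by omega
  have hu0 : ∀ j, u j ≠ 0 := by
    intro j
    rw [hu j, neg_ne_zero]
    apply Finset.prod_ne_zero_iff.mpr
    intro i hi
    rw [Finset.mem_erase] at hi
    exact inv_ne_zero (sub_ne_zero_of_ne fun h => hi.1 (hα h).symm)
  have harith1 : n - k + k = n := by omega
  have harith2 : (n - k - 1) + 1 = n - k := by omega
  have harith3 : (k - 1) + 1 = k := by omega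
  have harith4 : (n - k - 1) + (k - 1) + 1 = n - 1 := by omega
  -- coefficient facts for products
  have hprodn : ∀ g f : F[X], g.natDegree ≤ n - k → f.natDegree ≤ k →
      (g * f).coeff n = g.coeff (n - k) * f.coeff k := by
    intro g f hg hf
    have := coeff_mul_of_le' g f (n - k) k hg hf
    rwa [harith1] at this
  have hprodn1 : ∀ g f : F[X], g.natDegree ≤ n - k → f.natDegree ≤ k →
      (g * f).coeff (n - 1) =
        g.coeff (n - k) * f.coeff (k - 1) + g.coeff (n - k - 1) * f.coeff k := by
    intro g f hg hf
    have := coeff_mul_pred' g f (n - k - 1) (k - 1) (by rw [harith2]; exact hg)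
      (by rw [harith3]; exact hf)
    rwa [harith2, harith3, harith4] at this
  have hproddeg : ∀ g f : F[X], g.natDegree ≤ n - k → f.natDegree ≤ k →
      (g * f).natDegree ≤ n := by
    intro g f hg hf
    exact le_trans (Polynomial.natDegree_mul_le) (by omega)
  ext x
  simp only [dualCode, Set.mem_setOf_eq]
  constructor
  · intro hx
    have hrel : ∀ f : F[X], f.natDegree ≤ k → f.coeff k = η * f.coeff (k - 1) →
        (∑ j, x j.castSucc * (v j * f.eval (α j))) + x (Fin.last n) * f.coeff (k - 1) = 0 := by
      intro f h1 h2
      have := hx _ ⟨f, h1, h2, rfl⟩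
      rw [Fin.sum_univ_castSucc] at this
      simpa using this
    set g := Lagrange.interpolate Finset.univ α (fun j => x j.castSucc * v j / u j) with hgdef
    have hgdeg : g.degree < (n : ℕ) := by
      have := Lagrange.degree_interpolate_lt (s := Finset.univ)
        (fun j => x j.castSucc * v j / u j) hα.injOn
      simpa [Finset.card_univ, hgdef] using this
    have hgeval : ∀ j, g.eval (α j) = x j.castSucc * v j / u j := fun j =>
      Lagrange.eval_interpolate_at_node _ hα.injOn (Finset.mem_univ j)
    have hrel' : ∀ f : F[X], f.natDegree ≤ k → f.coeff k = η * f.coeff (k - 1) →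
        (∑ j, u j * (g * f).eval (α j)) + x (Fin.last n) * f.coeff (k - 1) = 0 := by
      intro f h1 h2
      rw [← hrel f h1 h2]
      congr 1
      apply Finset.sum_congr rfl
      intro j _
      rw [Polynomial.eval_mul, hgeval j]
      field_simp [hu0 j, hv j]
    have Hvan : ∀ m, m ≤ k - 1 → ∀ i, n - m ≤ i → g.coeff i = 0 := by
      intro m
      induction m with
      | zero =>
        intro _ i hi
        exact Polynomial.coeff_eq_zero_of_degree_lt
          (lt_of_lt_of_le hgdeg (by exact_mod_cast (by omega : n ≤ i)))
      | succ m ih =>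
        intro hm i hi
        have ihm := ih (by omega)
        by_cases hcase : n - m ≤ i
        · exact ihm i hcase
        have hieq : i = n - 1 - m := by omega
        have hXdeg : ((Polynomial.X : F[X]) ^ m).natDegree ≤ k := by
          simp only [Polynomial.natDegree_X_pow]; omega
        have hXk : ((Polynomial.X : F[X]) ^ m).coeff k =
            η * ((Polynomial.X : F[X]) ^ m).coeff (k - 1) := by
          rw [Polynomial.coeff_X_pow, Polynomial.coeff_X_pow, if_neg (by omega),
            if_neg (by omega), mul_zero]
        have hmain := hrel' _ hXdeg hXk
        rw [Polynomial.coeff_X_pow, if_neg (by omega), mul_zero, add_zero] at hmain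
        have hGXdeg : (g * Polynomial.X ^ m).natDegree ≤ n := by
          rw [Polynomial.natDegree_le_iff_coeff_eq_zero]
          intro N hN
          rw [Polynomial.coeff_mul_X_pow']
          split
          · exact ihm _ (by omega)
          · rfl
        have hkey := key_sum' hn1 α hα u hu _ hGXdeg
        rw [hmain] at hkey
        have c1 : (g * Polynomial.X ^ m).coeff (n - 1) = g.coeff (n - 1 - m) := by
          rw [Polynomial.coeff_mul_X_pow', if_pos (by omega)]
        have c2 : (g * Polynomial.X ^ m).coeff n = 0 := by
          rw [Polynomial.coeff_mul_X_pow', if_pos (by omega)]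
          exact ihm _ (by omega)
        rw [c1, c2, mul_zero, add_zero] at hkey
        rw [hieq]
        have := neg_eq_zero.mp hkey.symm
        exact this
    have hgdeg2 : g.natDegree ≤ n - k := by
      rw [Polynomial.natDegree_le_iff_coeff_eq_zero]
      intro N hN
      exact Hvan (k - 1) le_rfl N (by omega)
    refine ⟨g, hgdeg2, ?_⟩
    set f : F[X] := Polynomial.X ^ (k - 1) + Polynomial.C η * Polynomial.X ^ k with hfdef
    have hfd : f.natDegree ≤ k := by
      apply le_trans (Polynomial.natDegree_add_le _ _)
      apply max_le
      · simp only [Polynomial.natDegree_X_pow]; omega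
      · exact le_trans (Polynomial.natDegree_C_mul_le _ _) (by simp)
    have hfk : f.coeff k = η := by
      rw [hfdef, Polynomial.coeff_add, Polynomial.coeff_X_pow, Polynomial.coeff_C_mul,
        Polynomial.coeff_X_pow, if_neg (by omega), if_pos rfl]
      ring
    have hfk1 : f.coeff (k - 1) = 1 := by
      rw [hfdef, Polynomial.coeff_add, Polynomial.coeff_X_pow, Polynomial.coeff_C_mul,
        Polynomial.coeff_X_pow, if_pos rfl, if_neg (by omega)]
      ring
    have hftw : f.coeff k = η * f.coeff (k - 1) := by rw [hfk, hfk1, mul_one]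
    have hmain := hrel' f hfd hftw
    rw [key_sum' hn1 α hα u hu _ (hproddeg g f hgdeg2 hfd), hprodn g f hgdeg2 hfd,
      hprodn1 g f hgdeg2 hfd, hfk, hfk1] at hmain
    have hlast : x (Fin.last n) =
        η * g.coeff (n - k - 1) + (1 + η * ∑ i, α i) * g.coeff (n - k) := by
      linear_combination hmain
    funext i
    refine Fin.lastCases ?_ ?_ i
    · rw [Fin.snoc_last]
      exact hlast
    · intro j
      rw [Fin.snoc_castSucc, hgeval j]
      field_simp [hu0 j, hv j]
  · rintro ⟨g, hgdeg, rfl⟩ c ⟨f, hf, hft, rfl⟩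
    rw [Fin.sum_univ_castSucc]
    simp only [Fin.snoc_castSucc, Fin.snoc_last]
    have hsum : ∑ j, (u j / v j * g.eval (α j)) * (v j * f.eval (α j)) =
        ∑ j, u j * (g * f).eval (α j) := by
      apply Finset.sum_congr rfl
      intro j _
      rw [Polynomial.eval_mul]
      field_simp [hu0 j, hv j]
    rw [hsum, key_sum' hn1 α hα u hu _ (hproddeg g f hgdeg hf), hprodn g f hgdeg hf,
      hprodn1 g f hgdeg hf, hft]
    ring
end

section
/- Let 2 ≤ k < n ≤ q, let α = (α_1,…,α_n) ∈ F_q^n have pairwise distinct entries, let v = (v_1,…,v_n) with all v_i ∈ F_q^*, and let η ∈ F_q^*. Then every nonzero codeword of the dual code C_{k,n}(α,v,η,∞)^⊥ has Hamming weight at least k; consequently this dual, which is a linear code of length n+1 and dimension n+1−k, is MDS or AMDS. -/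
open Polynomial

open Polynomial

section AuxPoly
variable {F : Type*} [Field F]

noncomputable def qpoly (k : ℕ) (η : F) (t : ℕ) : F[X] :=
  X ^ t + if t = k - 1 then C η * X ^ k else 0

lemma coeff_qpoly (k : ℕ) (η : F) (t m : ℕ) :
    (qpoly k η t).coeff m =
      (if t = m then 1 else 0) + (if t = k - 1 then (if k = m then η else 0) else 0) := by
  unfold qpoly
  rw [coeff_add, coeff_X_pow]
  congr 1
  · simp [eq_comm]
  · by_cases h1 : t = k - 1
    · rw [if_pos h1, if_pos h1, coeff_C_mul, coeff_X_pow]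
      by_cases h3 : k = m
      · simp [h3]
      · simp [h3, Ne.symm h3]
    · rw [if_neg h1, if_neg h1, coeff_zero]

noncomputable def polyOf (k : ℕ) (η : F) (a : Fin k → F) : F[X] :=
  ∑ t : Fin k, C (a t) * qpoly k η (t : ℕ)

lemma coeff_polyOf (k : ℕ) (η : F) (a : Fin k → F) (m : ℕ) :
    (polyOf k η a).coeff m =
      ∑ t : Fin k, a t * ((if (t : ℕ) = m then 1 else 0) +
        (if (t : ℕ) = k - 1 then (if k = m then η else 0) else 0)) := by
  unfold polyOf
  rw [finset_sum_coeff]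
  simp [coeff_qpoly]

lemma coeff_polyOf_lt {k : ℕ} (η : F) (a : Fin k → F) {m : ℕ} (hm : m < k) :
    (polyOf k η a).coeff m = a ⟨m, hm⟩ := by
  rw [coeff_polyOf, Finset.sum_eq_single (⟨m, hm⟩ : Fin k)]
  · simp [hm.ne']
  · intro t _ ht
    have h1 : (t : ℕ) ≠ m := fun h => ht (Fin.ext h)
    simp [h1, hm.ne']
  · simp

lemma coeff_polyOf_k {k : ℕ} (hk : 1 ≤ k) (η : F) (a : Fin k → F) :
    (polyOf k η a).coeff k = η * a ⟨k - 1, by omega⟩ := by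
  rw [coeff_polyOf, Finset.sum_eq_single (⟨k - 1, by omega⟩ : Fin k)]
  · have h1 : k - 1 ≠ k := by omega
    simp [h1, mul_comm]
  · intro t _ ht
    have h1 : (t : ℕ) ≠ k := t.isLt.ne
    have h2 : (t : ℕ) ≠ k - 1 := fun h => ht (Fin.ext h)
    simp [h1, h2]
  · simp

lemma coeff_polyOf_gt {k : ℕ} (η : F) (a : Fin k → F) {m : ℕ} (hm : k < m) :
    (polyOf k η a).coeff m = 0 := by
  rw [coeff_polyOf]
  apply Finset.sum_eq_zero
  intro t _
  have h1 : (t : ℕ) ≠ m := by have := t.isLt; omega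
  simp [h1, hm.ne]

lemma natDegree_polyOf_le (k : ℕ) (η : F) (a : Fin k → F) : (polyOf k η a).natDegree ≤ k :=
  natDegree_le_iff_coeff_eq_zero.mpr fun _ hm => coeff_polyOf_gt η a hm

lemma eval_polyOf (k : ℕ) (η : F) (a : Fin k → F) (x : F) :
    (polyOf k η a).eval x = ∑ t : Fin k, a t * (qpoly k η (t : ℕ)).eval x := by
  unfold polyOf
  rw [eval_finset_sum]
  simp

lemma polyOf_coeffs {k : ℕ} (hk : 2 ≤ k) {η : F} {f : F[X]}
    (hdeg : f.natDegree ≤ k) (hcoeff : f.coeff k = η * f.coeff (k - 1)) :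
    f = polyOf k η (fun t => f.coeff (t : ℕ)) := by
  ext m
  rcases lt_trichotomy m k with hm | rfl | hm
  · rw [coeff_polyOf_lt η _ hm]
  · rw [coeff_polyOf_k (by omega) η]
    exact hcoeff
  · rw [coeff_polyOf_gt η _ hm, coeff_eq_zero_of_natDegree_lt (lt_of_le_of_lt hdeg hm)]

end AuxPoly

open Matrix
section AuxMat
variable {F : Type*} [Field F]

noncomputable def genMat (k n : ℕ) (α v : Fin n → F) (η : F) :
    Matrix (Fin k) (Fin (n + 1)) F :=
  Matrix.of fun t j =>
    (Fin.snoc (fun j' => v j' * (qpoly k η (t : ℕ)).eval (α j'))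
      (if (t : ℕ) = k - 1 then (1 : F) else 0) : Fin (n + 1) → F) j

lemma codeword_eq {k n : ℕ} (hk : 1 ≤ k) (α v : Fin n → F) (η : F) (a : Fin k → F) :
    (Fin.snoc (fun j => v j * (polyOf k η a).eval (α j)) ((polyOf k η a).coeff (k - 1))
      : Fin (n + 1) → F) = (genMat k n α v η)ᵀ.mulVec a := by
  funext j
  refine Fin.lastCases ?_ ?_ j
  · rw [Fin.snoc_last, coeff_polyOf_lt η a (by omega : k - 1 < k)]
    rw [Matrix.mulVec, dotProduct]
    rw [Finset.sum_eq_single (⟨k - 1, by omega⟩ : Fin k)]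
    · simp [genMat]
    · intro t _ ht
      have h2 : ¬ ((t : ℕ) = k - 1) := fun h => ht (Fin.ext h)
      simp [genMat, h2]
    · simp
  · intro j'
    rw [Fin.snoc_castSucc, Matrix.mulVec, dotProduct, eval_polyOf, Finset.mul_sum]
    apply Finset.sum_congr rfl
    intro t _
    simp [genMat]
    ring

end AuxMat

section AuxCode
variable {F : Type*} [Field F]

lemma ETGRS_eq_range {k n : ℕ} (hk : 2 ≤ k) (α v : Fin n → F) (η : F) :
    ETGRS k n α v η = Set.range ((genMat k n α v η)ᵀ.mulVecLin) := by
  ext c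
  constructor
  · rintro ⟨f, hdeg, hcf, rfl⟩
    refine ⟨fun t => f.coeff (t : ℕ), ?_⟩
    rw [Matrix.mulVecLin_apply, ← codeword_eq (by omega) α v η]
    rw [← polyOf_coeffs hk hdeg hcf]
  · rintro ⟨a, rfl⟩
    refine ⟨polyOf k η a, natDegree_polyOf_le k η a, ?_, ?_⟩
    · rw [coeff_polyOf_k (by omega) η a, coeff_polyOf_lt η a (by omega : k - 1 < k)]
    · rw [Matrix.mulVecLin_apply, ← codeword_eq (by omega) α v η]

lemma genMat_transpose_inj {k n : ℕ} (hk : 2 ≤ k) (hkn : k < n)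
    {α : Fin n → F} (hα : Function.Injective α)
    {v : Fin n → F} (hv : ∀ i, v i ≠ 0) (η : F) :
    Function.Injective ((genMat k n α v η)ᵀ.mulVecLin) := by
  rw [← LinearMap.ker_eq_bot, LinearMap.ker_eq_bot']
  intro a ha
  rw [Matrix.mulVecLin_apply, ← codeword_eq (by omega) α v η] at ha
  have hlast : a ⟨k - 1, by omega⟩ = 0 := by
    have := congrFun ha (Fin.last n)
    rwa [Fin.snoc_last, coeff_polyOf_lt η a (by omega : k - 1 < k)] at this
  have heval : ∀ j : Fin n, (polyOf k η a).eval (α j) = 0 := by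
    intro j
    have := congrFun ha (Fin.castSucc j)
    rw [Fin.snoc_castSucc] at this
    have hvj := hv j
    simp only [Pi.zero_apply] at this
    rcases mul_eq_zero.mp this with h | h
    · exact absurd h hvj
    · exact h
  have hdeg : (polyOf k η a).natDegree ≤ k - 2 := by
    rw [Polynomial.natDegree_le_iff_coeff_eq_zero]
    intro m hm
    rcases lt_trichotomy m k with h | rfl | h
    · have hm' : m = k - 1 := by omega
      subst hm'
      rw [coeff_polyOf_lt η a (by omega : k - 1 < k)]
      exact hlast
    · rw [coeff_polyOf_k (by omega) η a, hlast, mul_zero]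
    · exact coeff_polyOf_gt η a h
  have hzero : polyOf k η a = 0 := by
    apply Polynomial.eq_zero_of_natDegree_lt_card_of_eval_eq_zero _ hα heval
    rw [Fintype.card_fin]
    omega
  funext t
  have := coeff_polyOf_lt η a t.isLt
  rw [hzero, Polynomial.coeff_zero] at this
  simpa using this.symm

lemma dualCode_eq_ker {k n : ℕ} (hk : 2 ≤ k) (α v : Fin n → F) (η : F) :
    dualCode (ETGRS k n α v η) = ↑(LinearMap.ker (genMat k n α v η).mulVecLin) := by
  ext x
  simp only [dualCode, Set.mem_setOf_eq, SetLike.mem_coe, LinearMap.mem_ker,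
    ETGRS_eq_range hk α v η]
  constructor
  · intro h
    funext t
    have := h ((genMat k n α v η)ᵀ.mulVec (Pi.single t 1)) ⟨Pi.single t 1, rfl⟩
    rw [Matrix.mulVecLin_apply, Matrix.mulVec, Pi.zero_apply]
    have hone : ∀ i, ((genMat k n α v η)ᵀ.mulVec (Pi.single t 1)) i
        = genMat k n α v η t i := by
      intro i
      rw [Matrix.mulVec, dotProduct, Finset.sum_eq_single t]
      · simp
      · intro s _ hs
        simp [Matrix.transpose_apply, Pi.single_eq_of_ne hs]
      · simp
    simp only [hone] at this
    rw [dotProduct, ← this]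
    apply Finset.sum_congr rfl
    intro i _
    rw [mul_comm]
  · rintro h c ⟨a, rfl⟩
    have hrow : ∀ t, ∑ i, x i * genMat k n α v η t i = 0 := by
      intro t
      have := congrFun h t
      rw [Matrix.mulVecLin_apply, Matrix.mulVec, dotProduct, Pi.zero_apply] at this
      rw [← this]
      apply Finset.sum_congr rfl
      intro i _
      rw [mul_comm]
    calc ∑ i, x i * (genMat k n α v η)ᵀ.mulVecLin a i
        = ∑ i, ∑ t, x i * (genMat k n α v η t i * a t) := by
          apply Finset.sum_congr rfl
          intro i _
          rw [Matrix.mulVecLin_apply, Matrix.mulVec, dotProduct, Finset.mul_sum]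
          simp [Matrix.transpose_apply]
      _ = ∑ t, (∑ i, x i * genMat k n α v η t i) * a t := by
          rw [Finset.sum_comm]
          apply Finset.sum_congr rfl
          intro t _
          rw [Finset.sum_mul]
          apply Finset.sum_congr rfl
          intro i _
          ring
      _ = 0 := by simp [hrow]

end AuxCode

section AuxDim
variable {F : Type*} [Field F]

lemma finrank_ker_genMat {k n : ℕ} (hk : 2 ≤ k) (hkn : k < n)
    {α : Fin n → F} (hα : Function.Injective α)
    {v : Fin n → F} (hv : ∀ i, v i ≠ 0) (η : F) :
    Module.finrank F (LinearMap.ker (genMat k n α v η).mulVecLin) = n + 1 - k := by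
  have hrankT : (genMat k n α v η)ᵀ.rank = k := by
    have h := LinearMap.finrank_range_add_finrank_ker ((genMat k n α v η)ᵀ.mulVecLin)
    rw [LinearMap.ker_eq_bot.mpr (genMat_transpose_inj hk hkn hα hv η), finrank_bot,
      add_zero, Module.finrank_pi, Fintype.card_fin] at h
    rw [Matrix.rank]
    exact h
  have hrank : (genMat k n α v η).rank = k := by
    rw [← Matrix.rank_transpose]
    exact hrankT
  have h2 := LinearMap.finrank_range_add_finrank_ker ((genMat k n α v η).mulVecLin)
  rw [Module.finrank_pi, Fintype.card_fin] at h2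
  have h3 : Module.finrank F (LinearMap.range (genMat k n α v η).mulVecLin) = k := hrank
  omega

end AuxDim

section AuxWt
variable {F : Type*} [Field F] [DecidableEq F]

lemma dual_wt {k n : ℕ} (hk : 2 ≤ k) (hkn : k < n)
    {α : Fin n → F} (hα : Function.Injective α) {v : Fin n → F} (hv : ∀ i, v i ≠ 0)
    {η : F} (hη : η ≠ 0) :
    ∀ c ∈ dualCode (ETGRS k n α v η), c ≠ 0 → k ≤ hammingNorm c := by
  intro c hc hc0
  by_contra hw
  push_neg at hw
  simp only [dualCode, Set.mem_setOf_eq] at hc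
  classical
  set S : Finset (Fin n) := Finset.univ.filter (fun j => c (Fin.castSucc j) ≠ 0) with hS
  have hScard : S.card ≤ hammingNorm c := by
    unfold hammingNorm
    apply Finset.card_le_card_of_injOn Fin.castSucc
    · intro j hj
      simp only [hS, Finset.mem_coe, Finset.mem_filter, Finset.mem_univ, true_and] at hj
      simp [hj]
    · exact (Fin.castSucc_injective n).injOn
  have hzero : ∀ j : Fin n, c (Fin.castSucc j) = 0 := by
    intro j0
    by_contra hj0
    have hj0S : j0 ∈ S := by simp [hS, hj0]
    set g := Lagrange.basis S α j0 with hg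
    have hgdeg : g.natDegree = S.card - 1 := Lagrange.natDegree_basis hα.injOn hj0S
    have hcard1 : 1 ≤ S.card := Finset.card_pos.mpr ⟨j0, hj0S⟩
    have hgdeg' : g.natDegree ≤ k - 2 := by omega
    have hck : g.coeff k = 0 := Polynomial.coeff_eq_zero_of_natDegree_lt (by omega)
    have hck1 : g.coeff (k - 1) = 0 := Polynomial.coeff_eq_zero_of_natDegree_lt (by omega)
    have hmem : (Fin.snoc (fun j => v j * g.eval (α j)) (g.coeff (k - 1)) : Fin (n + 1) → F)
        ∈ ETGRS k n α v η := ⟨g, by omega, by rw [hck, hck1, mul_zero], rfl⟩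
    have h0 := hc _ hmem
    rw [Fin.sum_univ_castSucc] at h0
    simp only [Fin.snoc_castSucc, Fin.snoc_last, hck1, mul_zero, add_zero] at h0
    rw [Finset.sum_eq_single j0] at h0
    · rw [Lagrange.eval_basis_self hα.injOn hj0S, mul_one] at h0
      rcases mul_eq_zero.mp h0 with h | h
      · exact hj0 h
      · exact hv j0 h
    · intro b _ hb
      by_cases hbS : b ∈ S
      · rw [hg, Lagrange.eval_basis_of_ne (Ne.symm hb) hbS, mul_zero, mul_zero]
      · have hb0 : c (Fin.castSucc b) = 0 := by
          by_contra h
          exact hbS (by simp [hS, h])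
        rw [hb0, zero_mul]
    · intro h
      exact absurd (Finset.mem_univ j0) h
  -- now the last coordinate
  have h1 : c (Fin.last n) = 0 := by
    set f0 : Polynomial F := Polynomial.X ^ (k - 1) + Polynomial.C η * Polynomial.X ^ k with hf0
    have e1 : ¬ ((k : ℕ) = k - 1) := by omega
    have e2 : ¬ ((k - 1 : ℕ) = k) := by omega
    have hc1 : f0.coeff (k - 1) = 1 := by
      rw [hf0, Polynomial.coeff_add, Polynomial.coeff_X_pow, Polynomial.coeff_C_mul,
        Polynomial.coeff_X_pow]
      simp [e1, e2]
    have hckf : f0.coeff k = η * f0.coeff (k - 1) := by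
      rw [hc1, mul_one, hf0, Polynomial.coeff_add, Polynomial.coeff_X_pow,
        Polynomial.coeff_C_mul, Polynomial.coeff_X_pow]
      simp [e1, e2]
    have hd1 : f0.natDegree ≤ k := by
      apply le_trans (Polynomial.natDegree_add_le _ _)
      apply max_le
      · rw [Polynomial.natDegree_X_pow]
        omega
      · exact le_trans (Polynomial.natDegree_mul_le) (by simp)
    have hmem0 : (Fin.snoc (fun j => v j * f0.eval (α j)) (f0.coeff (k - 1)) :
        Fin (n + 1) → F) ∈ ETGRS k n α v η := ⟨f0, hd1, hckf, rfl⟩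
    have h1 := hc _ hmem0
    rw [Fin.sum_univ_castSucc] at h1
    simp only [Fin.snoc_castSucc, Fin.snoc_last] at h1
    rw [Finset.sum_eq_zero (fun j _ => by rw [hzero j, zero_mul]), hc1, mul_one, zero_add] at h1
    exact h1
  apply hc0
  funext i
  refine Fin.lastCases ?_ ?_ i
  · simpa using h1
  · intro j
    simpa using hzero j

end AuxWt

/-- the dual of a (+)-ETGRS code is MDS or AMDS. -/
theorem stmt2 {F : Type*} [Field F] [Fintype F] [DecidableEq F] {k n : ℕ}
    (hk : 2 ≤ k) (hkn : k < n) (hn : n ≤ Fintype.card F)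
    (α : Fin n → F) (hα : Function.Injective α)
    (v : Fin n → F) (hv : ∀ i, v i ≠ 0)
    (η : F) (hη : η ≠ 0) :
    (∀ c ∈ dualCode (ETGRS k n α v η), c ≠ 0 → k ≤ hammingNorm c) ∧
    codeDim (dualCode (ETGRS k n α v η)) = n + 1 - k ∧
    (isMDS (dualCode (ETGRS k n α v η)) ∨ isAMDS (dualCode (ETGRS k n α v η))) := by
  classical
  have hdual : dualCode (ETGRS k n α v η)
      = ↑(LinearMap.ker (genMat k n α v η).mulVecLin) := dualCode_eq_ker hk α v η
  have hdim : codeDim (dualCode (ETGRS k n α v η)) = n + 1 - k := by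
    rw [codeDim, hdual, Submodule.span_eq]
    exact finrank_ker_genMat hk hkn hα hv η
  have hwt := dual_wt (α := α) (v := v) (η := η) hk hkn hα hv hη
  refine ⟨hwt, hdim, ?_⟩
  -- existence of a nonzero dual codeword of weight at most k + 1
  have hle : n - k ≤ n + 1 := by omega
  have hfr : Module.finrank F (LinearMap.ker (genMat k n α v η).mulVecLin) = n + 1 - k :=
    finrank_ker_genMat hk hkn hα hv η
  set D := LinearMap.ker (genMat k n α v η).mulVecLin with hD
  set ρ : D →ₗ[F] (Fin (n - k) → F) :=
    (LinearMap.funLeft F F (Fin.castLE hle)).comp D.subtype with hρ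
  have hni : ¬ Function.Injective ρ := by
    intro hinj
    have h := LinearMap.finrank_le_finrank_of_injective hinj
    rw [hfr, Module.finrank_pi, Fintype.card_fin] at h
    omega
  have hker : LinearMap.ker ρ ≠ ⊥ := fun h => hni (LinearMap.ker_eq_bot.mp h)
  obtain ⟨x, hxker, hx0⟩ := (Submodule.ne_bot_iff _).mp hker
  set c : Fin (n + 1) → F := (x : Fin (n + 1) → F) with hcdef
  have hcD : c ∈ dualCode (ETGRS k n α v η) := by
    rw [hdual]
    exact x.2
  have hc0 : c ≠ 0 := by
    intro h
    exact hx0 (Subtype.ext h)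
  have hcsmall : ∀ i : Fin (n - k), c (Fin.castLE hle i) = 0 := by
    intro i
    have h := congrFun (LinearMap.mem_ker.mp hxker) i
    simpa [hρ, LinearMap.funLeft] using h
  have hnorm : hammingNorm c ≤ k + 1 := by
    unfold hammingNorm
    have hsub : ∀ j ∈ (Finset.univ.filter fun i => c i ≠ 0),
        (fun j : Fin (n + 1) => (j : ℕ)) j ∈ Finset.Ico (n - k) (n + 1) := by
      intro j hj
      simp only [Finset.mem_filter, Finset.mem_univ, true_and] at hj
      rw [Finset.mem_Ico]
      refine ⟨?_, j.isLt⟩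
      by_contra h
      push_neg at h
      have h2 := hcsmall ⟨(j : ℕ), h⟩
      rw [show Fin.castLE hle ⟨(j : ℕ), h⟩ = j from Fin.ext rfl] at h2
      exact hj h2
    have hcb := Finset.card_le_card_of_injOn _ hsub
      (fun a _ b _ hab => Fin.ext hab)
    rw [Nat.card_Ico] at hcb
    have : (Finset.univ.filter fun i => c i ≠ 0).card ≤ n + 1 - (n - k) := hcb
    calc ({i | c i ≠ 0} : Finset (Fin (n + 1))).card
        = (Finset.univ.filter fun i => c i ≠ 0).card := rfl
      _ ≤ n + 1 - (n - k) := this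
      _ ≤ k + 1 := by omega
  have hinf_le : minWt (dualCode (ETGRS k n α v η)) ≤ k + 1 := by
    refine le_trans (Nat.sInf_le ?_) hnorm
    exact ⟨c, hcD, hc0, rfl⟩
  have hinf_ge : k ≤ minWt (dualCode (ETGRS k n α v η)) := by
    have hne : {w | ∃ c' ∈ dualCode (ETGRS k n α v η), c' ≠ 0 ∧ hammingNorm c' = w}.Nonempty :=
      ⟨hammingNorm c, c, hcD, hc0, rfl⟩
    obtain ⟨c', hc', hne', hw'⟩ := Nat.sInf_mem hne
    rw [minWt, ← hw']
    exact hwt c' hc' hne'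
  rcases (by omega : minWt (dualCode (ETGRS k n α v η)) = k + 1 ∨
      minWt (dualCode (ETGRS k n α v η)) = k) with h | h
  · left
    rw [isMDS, h, hdim]
    omega
  · right
    rw [isAMDS, h, hdim]
    omega
end

section
/- Let 2 ≤ k < n ≤ q, let α = (α_1,…,α_n) ∈ F_q^n have pairwise distinct entries, let v = (v_1,…,v_n) with all v_i ∈ F_q^*, and let η ∈ F_q^*. Then: (a) C_{k,n}(α,v,η,∞) is a linear code of length n+1 and dimension k whose minimum Hamming distance equals n+1−k or n+2−k, and the number of its codewords of Hamming weight exactly n+1−k equals (q−1)·N(k, −η^{−1}, A_α); (b) C_{k,n}(α,v,η,∞) is MDS if and only if N(k, −η^{−1}, A_α) = 0; (c) C_{k,n}(α,v,η,∞) is NMDS if and only if N(k, −η^{−1}, A_α) > 0. -/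
set_option linter.unusedSectionVars false
open Polynomial

open Polynomial
namespace EProof
variable {F : Type*} [Field F]

def lastIdx (k : ℕ) (hk0 : 0 < k) : Fin k := ⟨k - 1, Nat.sub_lt hk0 one_pos⟩

noncomputable def Ppoly (k : ℕ) (hk0 : 0 < k) (η : F) (a : Fin k → F) : F[X] :=
  (∑ i : Fin k, C (a i) * X ^ (i : ℕ)) + C (η * a (lastIdx k hk0)) * X ^ k

theorem Ppoly_coeff (k : ℕ) (hk0 : 0 < k) (η : F) (a : Fin k → F) (j : ℕ) :
    (Ppoly k hk0 η a).coeff j =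
      (if h : j < k then a ⟨j, h⟩ else 0) + (if j = k then η * a (lastIdx k hk0) else 0) := by
  unfold Ppoly
  rw [coeff_add, finset_sum_coeff]
  congr 1
  · simp only [coeff_C_mul, coeff_X_pow]
    rcases lt_or_ge j k with h | h
    · rw [dif_pos h, Finset.sum_eq_single (⟨j, h⟩ : Fin k)]
      · simp
      · intro b _ hb
        have : j ≠ (b : ℕ) := by
          intro hc; apply hb; apply Fin.ext; simp [hc]
        simp [this]
      · simp
    · rw [dif_neg (not_lt.2 h)]
      apply Finset.sum_eq_zero
      intro b _
      have : j ≠ (b : ℕ) := by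
        intro hc; exact absurd (hc ▸ b.is_lt) (not_lt.2 h)
      simp [this]
  · simp only [coeff_C_mul, coeff_X_pow]
    by_cases h : j = k <;> simp [h]

theorem Ppoly_natDegree_le (k : ℕ) (hk0 : 0 < k) (η : F) (a : Fin k → F) :
    (Ppoly k hk0 η a).natDegree ≤ k := by
  rw [natDegree_le_iff_coeff_eq_zero]
  intro j hj
  rw [Ppoly_coeff]
  rw [dif_neg (by omega), if_neg (by omega), add_zero]

theorem Ppoly_coeff_lt (k : ℕ) (hk0 : 0 < k) (η : F) (a : Fin k → F) (i : Fin k) :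
    (Ppoly k hk0 η a).coeff i = a i := by
  rw [Ppoly_coeff, dif_pos i.is_lt, if_neg (by omega), add_zero]

theorem Ppoly_coeff_k (k : ℕ) (hk0 : 0 < k) (η : F) (a : Fin k → F) :
    (Ppoly k hk0 η a).coeff k = η * a (lastIdx k hk0) := by
  rw [Ppoly_coeff, dif_neg (lt_irrefl k), if_pos rfl, zero_add]

theorem Ppoly_coeff_pred (k : ℕ) (hk0 : 0 < k) (η : F) (a : Fin k → F) :
    (Ppoly k hk0 η a).coeff (k - 1) = a (lastIdx k hk0) := by
  have h1 : k - 1 < k := Nat.sub_lt hk0 one_pos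
  rw [Ppoly_coeff, dif_pos h1, if_neg (by omega), add_zero]
  rfl

theorem Ppoly_repr (k : ℕ) (hk0 : 0 < k) (η : F) (f : F[X])
    (hdeg : f.natDegree ≤ k) (hc : f.coeff k = η * f.coeff (k - 1)) :
    Ppoly k hk0 η (fun i : Fin k => f.coeff i) = f := by
  ext j
  rw [Ppoly_coeff]
  rcases lt_or_ge j k with h | h
  · rw [dif_pos h, if_neg (by omega), add_zero]
  · rcases eq_or_lt_of_le h with h' | h'
    · rw [dif_neg (by omega), if_pos h'.symm, zero_add, ← h', hc]
      rfl
    · rw [dif_neg (by omega), if_neg (by omega), add_zero]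
      exact (natDegree_le_iff_coeff_eq_zero.1 hdeg j h').symm

theorem Ppoly_add (k : ℕ) (hk0 : 0 < k) (η : F) (a b : Fin k → F) :
    Ppoly k hk0 η (a + b) = Ppoly k hk0 η a + Ppoly k hk0 η b := by
  ext j
  simp only [Ppoly_coeff, coeff_add, Pi.add_apply]
  split_ifs <;> ring

theorem Ppoly_smul (k : ℕ) (hk0 : 0 < k) (η : F) (c : F) (a : Fin k → F) :
    Ppoly k hk0 η (c • a) = c • Ppoly k hk0 η a := by
  ext j
  simp only [Ppoly_coeff, coeff_smul, Pi.smul_apply, smul_eq_mul]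
  split_ifs <;> ring

theorem Ppoly_zero (k : ℕ) (hk0 : 0 < k) (η : F) :
    Ppoly k hk0 η (0 : Fin k → F) = 0 := by
  ext j; simp [Ppoly_coeff]


section Main
variable {F : Type*} [Field F] [DecidableEq F]

noncomputable def phi (k n : ℕ) (hk0 : 0 < k) (α v : Fin n → F) (η : F) :
    (Fin k → F) →ₗ[F] (Fin (n + 1) → F) where
  toFun a := Fin.snoc (fun j => v j * (Ppoly k hk0 η a).eval (α j)) (a (lastIdx k hk0))
  map_add' a b := by
    funext i
    refine Fin.lastCases ?_ (fun j => ?_) i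
    · simp [Fin.snoc_last]
    · simp [Fin.snoc_castSucc, Ppoly_add]; ring
  map_smul' c a := by
    funext i
    refine Fin.lastCases ?_ (fun j => ?_) i
    · simp [Fin.snoc_last]
    · simp [Fin.snoc_castSucc, Ppoly_smul]; ring

theorem phi_apply (k n : ℕ) (hk0 : 0 < k) (α v : Fin n → F) (η : F) (a : Fin k → F) :
    phi k n hk0 α v η a =
      Fin.snoc (fun j => v j * (Ppoly k hk0 η a).eval (α j)) (a (lastIdx k hk0)) := rfl

theorem mem_iff (k n : ℕ) (hk0 : 0 < k) (α v : Fin n → F) (η : F) (c : Fin (n + 1) → F) :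
    c ∈ ETGRS k n α v η ↔ ∃ a : Fin k → F, phi k n hk0 α v η a = c := by
  constructor
  · rintro ⟨f, h1, h2, rfl⟩
    refine ⟨fun i => f.coeff i, ?_⟩
    rw [phi_apply, Ppoly_repr k hk0 η f h1 h2]
    rfl
  · rintro ⟨a, rfl⟩
    exact ⟨Ppoly k hk0 η a, Ppoly_natDegree_le k hk0 η a, by
      rw [Ppoly_coeff_k, Ppoly_coeff_pred], by rw [phi_apply, Ppoly_coeff_pred]⟩

theorem ETGRS_eq_range (k n : ℕ) (hk0 : 0 < k) (α v : Fin n → F) (η : F) :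
    ETGRS k n α v η = ↑(LinearMap.range (phi k n hk0 α v η)) := by
  ext c
  rw [mem_iff k n hk0 α v η c]
  simp [LinearMap.mem_range]

theorem phi_inj (k n : ℕ) (hk0 : 0 < k) (hkn : k < n) (α v : Fin n → F)
    (hα : Function.Injective α) (hv : ∀ i, v i ≠ 0) (η : F) :
    Function.Injective (phi k n hk0 α v η) := by
  rw [injective_iff_map_eq_zero]
  intro a ha
  have hev : ∀ j : Fin n, (Ppoly k hk0 η a).eval (α j) = 0 := by
    intro j
    have := congrFun ha (Fin.castSucc j)
    rw [phi_apply] at this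
    simp only [Fin.snoc_castSucc, Pi.zero_apply] at this
    exact (mul_eq_zero.1 this).resolve_left (hv j)
  have hP : Ppoly k hk0 η a = 0 := by
    apply Polynomial.eq_zero_of_natDegree_lt_card_of_eval_eq_zero' _ (Finset.univ.image α)
    · intro x hx
      obtain ⟨j, _, rfl⟩ := Finset.mem_image.1 hx
      exact hev j
    · rw [Finset.card_image_of_injective _ hα, Finset.card_univ, Fintype.card_fin]
      exact lt_of_le_of_lt (Ppoly_natDegree_le k hk0 η a) hkn
  funext i
  have := Ppoly_coeff_lt k hk0 η a i
  rw [hP, coeff_zero] at this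
  exact this.symm

theorem card_zeros_le {n : ℕ} (α : Fin n → F) (hα : Function.Injective α)
    (p : F[X]) (hp : p ≠ 0) {d : ℕ} (hd : p.natDegree ≤ d) :
    (Finset.univ.filter fun j => p.eval (α j) = 0).card ≤ d := by
  calc (Finset.univ.filter fun j => p.eval (α j) = 0).card
      ≤ p.roots.toFinset.card := by
        apply Finset.card_le_card_of_injOn α
        · intro j hj
          rw [Finset.mem_coe, Finset.mem_filter] at hj
          rw [Finset.mem_coe, Multiset.mem_toFinset, Polynomial.mem_roots']
          exact ⟨hp, hj.2⟩
        · exact Function.Injective.injOn hα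
    _ ≤ Multiset.card p.roots := Multiset.toFinset_card_le _
    _ ≤ p.natDegree := Polynomial.card_roots' p
    _ ≤ d := hd

theorem norm_snoc {n : ℕ} (y : Fin n → F) (b : F) :
    hammingNorm (Fin.snoc y b : Fin (n + 1) → F) =
      (Finset.univ.filter fun j => y j ≠ 0).card + (if b ≠ 0 then 1 else 0) := by
  unfold hammingNorm
  rw [Finset.card_filter, Fin.sum_univ_castSucc, ← Finset.card_filter]
  simp [Fin.snoc_castSucc, Fin.snoc_last]

theorem wt_formula (k n : ℕ) (hk0 : 0 < k) (α v : Fin n → F) (hv : ∀ i, v i ≠ 0)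
    (η : F) (a : Fin k → F) :
    hammingNorm (phi k n hk0 α v η a) =
      (n - (Finset.univ.filter fun j => (Ppoly k hk0 η a).eval (α j) = 0).card) +
        (if a (lastIdx k hk0) ≠ 0 then 1 else 0) := by
  rw [phi_apply, norm_snoc]
  congr 1
  have hfil : (Finset.univ.filter fun j => v j * (Ppoly k hk0 η a).eval (α j) ≠ 0) =
      (Finset.univ.filter fun j => ¬ (Ppoly k hk0 η a).eval (α j) = 0) := by
    apply Finset.filter_congr
    intro j _
    simp [hv j]
  rw [hfil]
  have := Finset.card_filter_add_card_filter_not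
    (s := (Finset.univ : Finset (Fin n))) (fun j => (Ppoly k hk0 η a).eval (α j) = 0)
  rw [Finset.card_univ, Fintype.card_fin] at this
  omega

theorem Ppoly_ne_zero (k : ℕ) (hk0 : 0 < k) (η : F) (a : Fin k → F) (ha : a ≠ 0) :
    Ppoly k hk0 η a ≠ 0 := by
  intro h
  apply ha
  funext i
  have := Ppoly_coeff_lt k hk0 η a i
  rw [h, coeff_zero] at this
  exact this.symm

theorem Ppoly_natDegree_le_sub (k : ℕ) (hk0 : 0 < k) (hk2 : 2 ≤ k) (η : F) (a : Fin k → F)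
    (ha : a (lastIdx k hk0) = 0) : (Ppoly k hk0 η a).natDegree ≤ k - 2 := by
  rw [natDegree_le_iff_coeff_eq_zero]
  intro j hj
  rw [Ppoly_coeff]
  rcases lt_or_ge j k with h | h
  · have hj1 : (⟨j, h⟩ : Fin k) = lastIdx k hk0 := by
      apply Fin.ext
      show j = k - 1
      omega
    rw [dif_pos h, hj1, ha, if_neg (by omega), add_zero]
  · rcases eq_or_lt_of_le h with h' | h'
    · rw [dif_neg (by omega), if_pos h'.symm, ha, mul_zero, add_zero]
    · rw [dif_neg (by omega), if_neg (by omega), add_zero]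

theorem exists_perp {ι : Type*} [Fintype ι] [DecidableEq ι] (W : Submodule F (ι → F))
    (hW : W ≠ ⊤) : ∃ y : ι → F, y ≠ 0 ∧ ∀ w ∈ W, ∑ i, y i * w i = 0 := by
  obtain ⟨f, hf0, hfW⟩ := Submodule.exists_dual_map_eq_bot_of_lt_top hW.lt_top inferInstance
  have hrep : ∀ x : ι → F, f x = ∑ i, x i * f (fun j => if i = j then 1 else 0) := by
    intro x
    conv_lhs => rw [pi_eq_sum_univ x]
    rw [map_sum]
    congr 1
    funext i
    rw [map_smul, smul_eq_mul]
  refine ⟨fun i => f (fun j => if i = j then 1 else 0), ?_, ?_⟩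
  · intro h
    apply hf0
    apply LinearMap.ext
    intro x
    rw [hrep x]
    simp only [congrFun h]
    simp
  · intro w hw
    have : f w = 0 := by
      have := hfW.le (Submodule.mem_map_of_mem hw)
      simpa using this
    rw [hrep w] at this
    simpa [mul_comm] using this

theorem card_mem_eq {n : ℕ} (α : Fin n → F) (hα : Function.Injective α)
    (A : Finset F) (hA : ↑A ⊆ Set.range α) :
    (Finset.univ.filter fun j => α j ∈ A).card = A.card := by
  apply Finset.card_bij (fun j _ => α j)
  · intro j hj; exact (Finset.mem_filter.1 hj).2
  · intro j₁ h₁ j₂ h₂ h; exact hα h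
  · intro b hb
    obtain ⟨j, rfl⟩ := hA hb
    exact ⟨j, Finset.mem_filter.2 ⟨Finset.mem_univ _, hb⟩, rfl⟩

theorem gA_natDegree (A : Finset F) : (∏ r ∈ A, (X - C r)).natDegree = A.card := by
  rw [natDegree_prod_of_monic _ _ (fun r _ => monic_X_sub_C r)]
  simp [natDegree_X_sub_C]

theorem gA_monic (A : Finset F) : (∏ r ∈ A, (X - C r)).Monic :=
  monic_prod_of_monic _ _ (fun r _ => monic_X_sub_C r)

theorem gA_coeff_top (A : Finset F) : (∏ r ∈ A, (X - C r)).coeff A.card = 1 := by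
  have := (gA_monic A).coeff_natDegree
  rwa [gA_natDegree] at this

theorem gA_coeff_pred (A : Finset F) (hA : 0 < A.card) :
    (∏ r ∈ A, (X - C r)).coeff (A.card - 1) = -∑ x ∈ A, x := by
  have := prod_X_sub_C_coeff_card_pred A (fun r => r) hA
  simpa using this

theorem gA_eval (A : Finset F) (x : F) :
    (∏ r ∈ A, (X - C r)).eval x = ∏ r ∈ A, (x - r) := by
  rw [eval_prod]; simp

theorem gA_coeff_gt (A : Finset F) {j : ℕ} (hj : A.card < j) :
    (∏ r ∈ A, (X - C r)).coeff j = 0 :=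
  coeff_eq_zero_of_natDegree_lt (by rw [gA_natDegree]; exact hj)

theorem split_code (k : ℕ) (hk0 : 0 < k) (η lam : F) (hη : η ≠ 0)
    (A : Finset F) (hcard : A.card = k) (hsum : ∑ x ∈ A, x = -η⁻¹) :
    (C (η * lam) * ∏ r ∈ A, (X - C r)).natDegree ≤ k ∧
    (C (η * lam) * ∏ r ∈ A, (X - C r)).coeff k =
      η * (C (η * lam) * ∏ r ∈ A, (X - C r)).coeff (k - 1) ∧
    (C (η * lam) * ∏ r ∈ A, (X - C r)).coeff (k - 1) = lam ∧
    ∀ x, (C (η * lam) * ∏ r ∈ A, (X - C r)).eval x = (η * lam) * ∏ r ∈ A, (x - r) := by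
  have h1 : (C (η * lam) * ∏ r ∈ A, (X - C r)).coeff (k - 1) = lam := by
    rw [coeff_C_mul, ← hcard, gA_coeff_pred A (by omega), hsum]
    field_simp
  have h2 : (C (η * lam) * ∏ r ∈ A, (X - C r)).coeff k = η * lam := by
    rw [coeff_C_mul, ← hcard, gA_coeff_top, mul_one]
  refine ⟨?_, by rw [h1, h2], h1, ?_⟩
  · apply le_trans (natDegree_C_mul_le _ _)
    rw [gA_natDegree, hcard]
  · intro x
    rw [eval_mul, eval_C, gA_eval]

theorem eq_split (k : ℕ) (f : F[X]) (hdeg : f.natDegree ≤ k)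
    (A : Finset F) (hcard : A.card = k) (hroots : ∀ r ∈ A, f.eval r = 0)
    (hk0 : 0 < k) :
    f = C (f.coeff k) * ∏ r ∈ A, (X - C r) := by
  have hgd : (∏ r ∈ A, (X - C r)).natDegree = k := by rw [gA_natDegree, hcard]
  have hsub : (f - C (f.coeff k) * ∏ r ∈ A, (X - C r)).natDegree < k := by
    have : (f - C (f.coeff k) * ∏ r ∈ A, (X - C r)).natDegree ≤ k - 1 := by
      rw [natDegree_le_iff_coeff_eq_zero]
      intro j hj
      rw [coeff_sub, coeff_C_mul]
      rcases eq_or_lt_of_le (show k ≤ j by omega) with h' | h'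
      · rw [← h', ← hcard, gA_coeff_top, mul_one, sub_self]
      · rw [natDegree_le_iff_coeff_eq_zero.1 hdeg j h', gA_coeff_gt A (by omega),
          mul_zero, sub_zero]
    omega
  have h0 : f - C (f.coeff k) * ∏ r ∈ A, (X - C r) = 0 := by
    apply Polynomial.eq_zero_of_natDegree_lt_card_of_eval_eq_zero' _ A
    · intro r hr
      rw [eval_sub, hroots r hr, eval_mul, eval_C, gA_eval,
        Finset.prod_eq_zero hr (by ring), mul_zero, sub_zero]
    · rw [hcard]; exact hsub
  linear_combination (norm := ring_nf) h0

theorem prod_sub_eq_zero_iff (A : Finset F) (x : F) :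
    (∏ r ∈ A, (x - r)) = 0 ↔ x ∈ A := by
  rw [Finset.prod_eq_zero_iff]
  constructor
  · rintro ⟨r, hr, hz⟩
    rw [sub_eq_zero] at hz
    rwa [hz]
  · intro hx
    exact ⟨x, hx, sub_self x⟩

theorem wt_snoc_prod {n : ℕ} (α v : Fin n → F) (hα : Function.Injective α)
    (hv : ∀ i, v i ≠ 0) (c0 : F) (hc0 : c0 ≠ 0) (A : Finset F) (hA : ↑A ⊆ Set.range α)
    (b : F) :
    hammingNorm (Fin.snoc (fun j => v j * (c0 * ∏ r ∈ A, (α j - r))) b : Fin (n + 1) → F)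
      = (n - A.card) + (if b ≠ 0 then 1 else 0) := by
  rw [norm_snoc]
  congr 1
  have h1 : (Finset.univ.filter fun j => v j * (c0 * ∏ r ∈ A, (α j - r)) ≠ 0)
      = (Finset.univ.filter fun j => ¬ α j ∈ A) := by
    apply Finset.filter_congr
    intro j _
    simp [hv j, hc0, prod_sub_eq_zero_iff A (α j), sub_eq_zero]
  rw [h1]
  have h2 := Finset.card_filter_add_card_filter_not
    (s := (Finset.univ : Finset (Fin n))) (fun j => α j ∈ A)
  have h3 := card_mem_eq α hα A hA
  rw [Finset.card_univ, Fintype.card_fin] at h2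
  omega

theorem split_word_mem (k n : ℕ) (hk0 : 0 < k) (α v : Fin n → F) (η lam : F) (hη : η ≠ 0)
    (A : Finset F) (hcard : A.card = k) (hsum : ∑ x ∈ A, x = -η⁻¹) :
    (Fin.snoc (fun j => v j * ((η * lam) * ∏ r ∈ A, (α j - r))) lam : Fin (n + 1) → F)
      ∈ ETGRS k n α v η := by
  obtain ⟨hdeg, hcond, hpred, heval⟩ := split_code k hk0 η lam hη A hcard hsum
  refine ⟨_, hdeg, hcond, ?_⟩
  rw [hpred]
  have hfun : (fun j : Fin n => v j * eval (α j) (C (η * lam) * ∏ r ∈ A, (X - C r)))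
      = (fun j => v j * ((η * lam) * ∏ r ∈ A, (α j - r))) := by
    funext j
    rw [heval]
  rw [hfun]

noncomputable def psi (k n : ℕ) (hk0 : 0 < k) (α v : Fin n → F) (η : F) :
    (Fin (n + 1) → F) →ₗ[F] (Fin k → F) where
  toFun x := fun s => ∑ i, x i * (phi k n hk0 α v η (fun t => if s = t then 1 else 0)) i
  map_add' x y := by
    funext s
    simp [add_mul, Finset.sum_add_distrib]
  map_smul' c x := by
    funext s
    simp [Finset.mul_sum, mul_assoc]

theorem psi_apply (k n : ℕ) (hk0 : 0 < k) (α v : Fin n → F) (η : F) (x : Fin (n + 1) → F)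
    (s : Fin k) : psi k n hk0 α v η x s =
      ∑ i, x i * (phi k n hk0 α v η (fun t => if s = t then 1 else 0)) i := rfl

theorem phi_eq_sum (k n : ℕ) (hk0 : 0 < k) (α v : Fin n → F) (η : F) (a : Fin k → F) :
    phi k n hk0 α v η a = ∑ s, a s • phi k n hk0 α v η (fun t => if s = t then 1 else 0) := by
  conv_lhs => rw [pi_eq_sum_univ a]
  rw [map_sum]
  congr 1
  funext s
  rw [map_smul]

theorem dual_eq_ker (k n : ℕ) (hk0 : 0 < k) (α v : Fin n → F) (η : F) :
    dualCode (ETGRS k n α v η) = ↑(LinearMap.ker (psi k n hk0 α v η)) := by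
  ext x
  simp only [dualCode, Set.mem_setOf_eq, SetLike.mem_coe, LinearMap.mem_ker]
  constructor
  · intro h
    funext s
    rw [psi_apply]
    exact h _ ((mem_iff k n hk0 α v η _).2 ⟨_, rfl⟩)
  · intro h c hc
    obtain ⟨a, rfl⟩ := (mem_iff k n hk0 α v η c).1 hc
    rw [phi_eq_sum k n hk0 α v η a]
    have : ∀ i, (∑ s, a s • phi k n hk0 α v η (fun t => if s = t then 1 else 0)) i
        = ∑ s, a s * phi k n hk0 α v η (fun t => if s = t then 1 else 0) i := by
      intro i; simp
    calc ∑ i, x i * (∑ s, a s • phi k n hk0 α v η (fun t => if s = t then 1 else 0)) i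
        = ∑ i, ∑ s, a s * (x i * phi k n hk0 α v η (fun t => if s = t then 1 else 0) i) := by
          apply Finset.sum_congr rfl
          intro i _
          rw [this i, Finset.mul_sum]
          apply Finset.sum_congr rfl
          intro s _
          ring
      _ = ∑ s, ∑ i, a s * (x i * phi k n hk0 α v η (fun t => if s = t then 1 else 0) i) :=
          Finset.sum_comm
      _ = ∑ s, a s * psi k n hk0 α v η x s := by
          apply Finset.sum_congr rfl
          intro s _
          rw [psi_apply, Finset.mul_sum]
      _ = 0 := by
          rw [h]
          simp

theorem psi_surj (k n : ℕ) (hk0 : 0 < k) (hkn : k < n) (α v : Fin n → F)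
    (hα : Function.Injective α) (hv : ∀ i, v i ≠ 0) (η : F) :
    LinearMap.range (psi k n hk0 α v η) = ⊤ := by
  by_contra h
  obtain ⟨y, hy0, hy⟩ := exists_perp _ h
  apply hy0
  have key : phi k n hk0 α v η y = 0 := by
    have h1 : ∀ i, (phi k n hk0 α v η y) i = 0 := by
      intro i
      have h2 := hy _ ⟨(Pi.single i 1 : Fin (n+1) → F), rfl⟩
      simp only [psi_apply] at h2
      have h3 : ∀ s : Fin k, ∑ i', (Pi.single i 1 : Fin (n+1) → F) i' *
          (phi k n hk0 α v η (fun t => if s = t then 1 else 0)) i'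
          = (phi k n hk0 α v η (fun t => if s = t then 1 else 0)) i := by
        intro s
        rw [Finset.sum_eq_single i]
        · simp
        · intro b _ hb; simp [Pi.single_apply, hb]
        · simp
      simp only [h3] at h2
      rw [phi_eq_sum k n hk0 α v η y]
      simpa using h2
    funext i
    exact h1 i
  exact phi_inj k n hk0 hkn α v hα hv η (by rw [key, map_zero])

theorem dual_lb (k n : ℕ) (hk0 : 0 < k) (hk2 : 2 ≤ k) (α v : Fin n → F)
    (hα : Function.Injective α) (hv : ∀ i, v i ≠ 0) (η : F)
    (x : Fin (n + 1) → F) (hx : x ∈ dualCode (ETGRS k n α v η))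
    (hw : hammingNorm x < k) : x = 0 := by
  have hn : hammingNorm x =
      (Finset.univ.filter fun j : Fin n => x (Fin.castSucc j) ≠ 0).card +
        (if x (Fin.last n) ≠ 0 then 1 else 0) := by
    have := norm_snoc (Fin.init x) (x (Fin.last n))
    rw [Fin.snoc_init_self] at this
    exact this
  set Jfull := Finset.univ.filter fun j : Fin n => x (Fin.castSucc j) ≠ 0 with hJfull
  have hJcard : Jfull.card ≤ k - 1 := by omega
  have hfirst : ∀ j0 : Fin n, x (Fin.castSucc j0) = 0 := by
    intro j0
    by_contra hj0
    have hj0m : j0 ∈ Jfull := by rw [hJfull]; simp [hj0]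
    set A := (Jfull \ {j0}).image α with hA
    have hAcard : A.card = (Jfull \ {j0}).card := Finset.card_image_of_injective _ hα
    have hAk : A.card ≤ k - 2 := by
      rw [hAcard, Finset.card_sdiff_of_subset (Finset.singleton_subset_iff.2 hj0m),
        Finset.card_singleton]
      omega
    set f := ∏ r ∈ A, (X - C r) with hf
    have hfdeg : f.natDegree ≤ k := by rw [hf, gA_natDegree]; omega
    have hck : f.coeff k = 0 := gA_coeff_gt A (by omega)
    have hck1 : f.coeff (k - 1) = 0 := gA_coeff_gt A (by omega)
    have hcmem : (Fin.snoc (fun j => v j * f.eval (α j)) (f.coeff (k - 1)) :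
        Fin (n + 1) → F) ∈ ETGRS k n α v η :=
      ⟨f, hfdeg, by rw [hck, hck1, mul_zero], rfl⟩
    have h0 := hx _ hcmem
    rw [Fin.sum_univ_castSucc] at h0
    simp only [Fin.snoc_castSucc, Fin.snoc_last] at h0
    rw [hck1, mul_zero, add_zero] at h0
    rw [Finset.sum_eq_single j0] at h0
    · apply hj0
      have hv0 : v j0 * f.eval (α j0) ≠ 0 := by
        apply mul_ne_zero (hv j0)
        rw [hf, gA_eval]
        rw [Ne, prod_sub_eq_zero_iff]
        intro hmem
        rw [hA] at hmem
        obtain ⟨j1, hj1, hj1e⟩ := Finset.mem_image.1 hmem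
        have := hα hj1e
        rw [this] at hj1
        simp at hj1
      exact (mul_eq_zero.1 h0).resolve_right hv0
    · intro b _ hb
      by_cases hxb : x (Fin.castSucc b) = 0
      · rw [hxb, zero_mul]
      · have hbJ : b ∈ Jfull \ {j0} := by
          rw [Finset.mem_sdiff, Finset.mem_singleton]
          exact ⟨by rw [hJfull]; simp [hxb], hb⟩
        have : f.eval (α b) = 0 := by
          rw [hf, gA_eval, prod_sub_eq_zero_iff, hA]
          exact Finset.mem_image_of_mem α hbJ
        rw [this, mul_zero, mul_zero]
    · intro h; exact absurd (Finset.mem_univ j0) h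
  have hlast : x (Fin.last n) = 0 := by
    set f0 : F[X] := X ^ (k - 1) + C η * X ^ k with hf0
    have hc1 : f0.coeff (k - 1) = 1 := by
      rw [hf0, coeff_add, coeff_X_pow, coeff_C_mul, coeff_X_pow,
        if_pos rfl, if_neg (by omega), mul_zero, add_zero]
    have hck : f0.coeff k = η := by
      rw [hf0, coeff_add, coeff_X_pow, coeff_C_mul, coeff_X_pow,
        if_neg (by omega), if_pos rfl, mul_one, zero_add]
    have hdeg : f0.natDegree ≤ k := by
      apply le_trans (natDegree_add_le _ _)
      rw [natDegree_X_pow]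
      apply max_le (by omega)
      apply le_trans (natDegree_C_mul_le _ _)
      rw [natDegree_X_pow]
    have hmem0 : (Fin.snoc (fun j => v j * f0.eval (α j)) (f0.coeff (k - 1)) :
        Fin (n + 1) → F) ∈ ETGRS k n α v η :=
      ⟨f0, hdeg, by rw [hck, hc1, mul_one], rfl⟩
    have h0 := hx _ hmem0
    rw [Fin.sum_univ_castSucc] at h0
    simp only [Fin.snoc_castSucc, Fin.snoc_last] at h0
    rw [Finset.sum_eq_zero (fun j _ => by rw [hfirst j, zero_mul]), zero_add, hc1,
      mul_one] at h0
    exact h0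
  funext i
  refine Fin.lastCases ?_ (fun j => ?_) i
  · exact hlast
  · exact hfirst j

theorem dual_word (k n : ℕ) (hk0 : 0 < k) (α v : Fin n → F)
    (hα : Function.Injective α) (hv : ∀ i, v i ≠ 0) (η : F) (hη : η ≠ 0)
    (A : Finset F) (hAsub : ↑A ⊆ Set.range α) (hcard : A.card = k)
    (hsum : ∑ x ∈ A, x = -η⁻¹) :
    ∃ x : Fin (n + 1) → F, x ∈ dualCode (ETGRS k n α v η) ∧ x ≠ 0 ∧ hammingNorm x ≤ k := by
  classical
  set J := Finset.univ.filter (fun j : Fin n => α j ∈ A) with hJ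
  have hJcard : J.card = k := by rw [hJ, card_mem_eq α hα A hAsub, hcard]
  set f1 := C η * ∏ r ∈ A, (X - C r) with hf1
  have hf1deg : f1.natDegree ≤ k :=
    le_trans (natDegree_C_mul_le _ _) (by rw [gA_natDegree, hcard])
  have hf1k : f1.coeff k = η := by rw [hf1, coeff_C_mul, ← hcard, gA_coeff_top, mul_one]
  have hf1k1 : f1.coeff (k - 1) = 1 := by
    rw [hf1, coeff_C_mul, ← hcard, gA_coeff_pred A (by omega), hsum]
    field_simp
  have hf1cond : f1.coeff k = η * f1.coeff (k - 1) := by rw [hf1k, hf1k1, mul_one]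
  have hf1ne : f1 ≠ 0 := by
    intro h
    apply hη
    rw [← hf1k, h, coeff_zero]
  set ρ : (Fin k → F) →ₗ[F] (↥J → F) :=
    { toFun := fun a => fun j => (Ppoly k hk0 η a).eval (α ↑j),
      map_add' := by
        intro a b
        funext j
        show eval (α ↑j) (Ppoly k hk0 η (a + b)) =
          eval (α ↑j) (Ppoly k hk0 η a) + eval (α ↑j) (Ppoly k hk0 η b)
        rw [Ppoly_add, eval_add]
      map_smul' := by
        intro c a
        funext j
        show eval (α ↑j) (Ppoly k hk0 η (c • a)) = c * eval (α ↑j) (Ppoly k hk0 η a)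
        rw [Ppoly_smul, eval_smul, smul_eq_mul] } with hρ
  have hρ_apply : ∀ (a : Fin k → F) (j : ↥J), ρ a j = (Ppoly k hk0 η a).eval (α ↑j) :=
    fun a j => rfl
  set a0 : Fin k → F := fun i => f1.coeff i with ha0
  have ha0P : Ppoly k hk0 η a0 = f1 := Ppoly_repr k hk0 η f1 hf1deg hf1cond
  have ha0ne : a0 ≠ 0 := by
    intro h
    apply hf1ne
    rw [← ha0P, h, Ppoly_zero]
  have ha0ker : ρ a0 = 0 := by
    funext j
    show eval (α ↑j) (Ppoly k hk0 η a0) = 0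
    have hmem : α ↑j ∈ A := (Finset.mem_filter.1 j.2).2
    rw [ha0P, hf1, eval_mul, gA_eval, (prod_sub_eq_zero_iff A (α ↑j)).2 hmem, mul_zero]
  have hrange : LinearMap.range ρ ≠ ⊤ := by
    intro htop
    have h1 := LinearMap.finrank_range_add_finrank_ker ρ
    rw [htop, finrank_top, Module.finrank_pi, Module.finrank_pi, Fintype.card_coe,
      hJcard, Fintype.card_fin] at h1
    have h2 : Module.finrank F ↥(LinearMap.ker ρ) = 0 := by omega
    rw [Submodule.finrank_eq_zero] at h2
    have hk' : a0 ∈ LinearMap.ker ρ := ha0ker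
    rw [h2] at hk'
    exact ha0ne (by simpa using hk')
  obtain ⟨y, hy0, hy⟩ := exists_perp _ hrange
  refine ⟨Fin.snoc (fun j => if h : j ∈ J then y ⟨j, h⟩ * (v j)⁻¹ else 0) 0, ?_, ?_, ?_⟩
  · intro c hc
    obtain ⟨a, rfl⟩ := (mem_iff k n hk0 α v η c).1 hc
    rw [phi_apply, Fin.sum_univ_castSucc]
    simp only [Fin.snoc_castSucc, Fin.snoc_last]
    rw [zero_mul, add_zero]
    rw [← Finset.sum_subset (Finset.subset_univ J)
      (fun j _ hj => by rw [dif_neg hj, zero_mul])]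
    rw [← Finset.sum_attach J (fun j =>
      (if h : j ∈ J then y ⟨j, h⟩ * (v j)⁻¹ else 0) * (v j * (Ppoly k hk0 η a).eval (α j)))]
    have hterm : ∀ j : ↥J,
        (if h : ↑j ∈ J then y ⟨↑j, h⟩ * (v ↑j)⁻¹ else 0) *
          (v ↑j * (Ppoly k hk0 η a).eval (α ↑j)) = y j * ρ a j := by
      intro j
      rw [dif_pos j.2, Subtype.coe_eta, hρ_apply, mul_assoc, ← mul_assoc ((v ↑j)⁻¹),
        inv_mul_cancel₀ (hv ↑j), one_mul]
    rw [Finset.sum_congr rfl (fun j _ => hterm j)]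
    have := hy (ρ a) ⟨a, rfl⟩
    rw [← this]
    rw [← Finset.univ_eq_attach]
  · obtain ⟨j, hyj⟩ := Function.ne_iff.1 hy0
    intro h
    apply hyj
    have h2 := congrFun h (Fin.castSucc ↑j)
    rw [Fin.snoc_castSucc] at h2
    rw [dif_pos j.2, Subtype.coe_eta] at h2
    have := (mul_eq_zero.1 h2).resolve_right (inv_ne_zero (hv ↑j))
    exact this
  · rw [norm_snoc]
    rw [if_neg (by simp), add_zero]
    calc (Finset.univ.filter fun j =>
        (if h : j ∈ J then y ⟨j, h⟩ * (v j)⁻¹ else 0) ≠ 0).card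
        ≤ J.card := by
          apply Finset.card_le_card
          intro j hj
          rw [Finset.mem_filter] at hj
          by_contra hjJ
          rw [dif_neg hjJ] at hj
          exact hj.2 rfl
      _ = k := hJcard

end Main

end EProof

/-- MDS/NMDS criterion and minimum-weight count for (+)-ETGRS codes. -/
theorem stmt3 {F : Type*} [Field F] [Fintype F] [DecidableEq F] {k n : ℕ}
    (hk : 2 ≤ k) (hkn : k < n) (hn : n ≤ Fintype.card F)
    (α : Fin n → F) (hα : Function.Injective α)
    (v : Fin n → F) (hv : ∀ i, v i ≠ 0)
    (η : F) (hη : η ≠ 0) :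
    codeDim (ETGRS k n α v η) = k ∧
    (minWt (ETGRS k n α v η) = n + 1 - k ∨ minWt (ETGRS k n α v η) = n + 2 - k) ∧
    Set.ncard {c ∈ ETGRS k n α v η | hammingNorm c = n + 1 - k} =
      (Fintype.card F - 1) * Nsub k (-η⁻¹) (Set.range α) ∧
    (isMDS (ETGRS k n α v η) ↔ Nsub k (-η⁻¹) (Set.range α) = 0) ∧
    (isNMDS (ETGRS k n α v η) ↔ 0 < Nsub k (-η⁻¹) (Set.range α)) := by
  classical
  have hk0 : 0 < k := by omega
  have hq : 2 ≤ Fintype.card F := by omega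
  have hmem : ∀ c, c ∈ ETGRS k n α v η ↔ ∃ a, EProof.phi k n hk0 α v η a = c :=
    fun c => EProof.mem_iff k n hk0 α v η c
  have hinj := EProof.phi_inj k n hk0 hkn α v hα hv η
  -- dimension
  have hdim : codeDim (ETGRS k n α v η) = k := by
    rw [codeDim, EProof.ETGRS_eq_range k n hk0 α v η, Submodule.span_eq,
      LinearMap.finrank_range_of_inj hinj, Module.finrank_pi, Fintype.card_fin]
  -- zero counting bounds
  have hZle : ∀ a : Fin k → F, a ≠ 0 →
      (Finset.univ.filter fun j => (EProof.Ppoly k hk0 η a).eval (α j) = 0).card ≤ k :=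
    fun a ha => EProof.card_zeros_le α hα _ (EProof.Ppoly_ne_zero k hk0 η a ha)
      (EProof.Ppoly_natDegree_le k hk0 η a)
  have hZle2 : ∀ a : Fin k → F, a ≠ 0 → a (EProof.lastIdx k hk0) = 0 →
      (Finset.univ.filter fun j => (EProof.Ppoly k hk0 η a).eval (α j) = 0).card ≤ k - 2 :=
    fun a ha hl => EProof.card_zeros_le α hα _ (EProof.Ppoly_ne_zero k hk0 η a ha)
      (EProof.Ppoly_natDegree_le_sub k hk0 hk η a hl)
  -- lower bound on weights
  have hLB : ∀ c ∈ ETGRS k n α v η, c ≠ 0 → n + 1 - k ≤ hammingNorm c := by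
    intro c hc hc0
    obtain ⟨a, rfl⟩ := (hmem c).1 hc
    have ha : a ≠ 0 := fun h => hc0 (by rw [h, map_zero])
    rw [EProof.wt_formula k n hk0 α v hv η a]
    by_cases hl : a (EProof.lastIdx k hk0) = 0
    · have h1 := hZle2 a ha hl
      rw [if_neg (not_not_intro hl)]
      omega
    · have h1 := hZle a ha
      rw [if_pos hl]
      omega
  have hLB2 : ∀ c ∈ ETGRS k n α v η, c ≠ 0 → hammingNorm c ≠ n + 1 - k →
      n + 2 - k ≤ hammingNorm c := by
    intro c hc hc0 hcne
    obtain ⟨a, rfl⟩ := (hmem c).1 hc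
    have ha : a ≠ 0 := fun h => hc0 (by rw [h, map_zero])
    rw [EProof.wt_formula k n hk0 α v hv η a] at hcne ⊢
    by_cases hl : a (EProof.lastIdx k hk0) = 0
    · have h1 := hZle2 a ha hl
      rw [if_neg (not_not_intro hl)] at hcne ⊢
      omega
    · have h1 := hZle a ha
      rw [if_pos hl] at hcne ⊢
      omega
  -- the image description of the minimum-weight codewords
  have hΨmem : ∀ (lam : F) (A : Finset F), lam ≠ 0 → ↑A ⊆ Set.range α → A.card = k →
      (∑ x ∈ A, x = -η⁻¹) →
      (Fin.snoc (fun j => v j * ((η * lam) * ∏ r ∈ A, (α j - r))) lam : Fin (n + 1) → F)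
        ∈ {c ∈ ETGRS k n α v η | hammingNorm c = n + 1 - k} := by
    intro lam A hlam hsub hcard hsum
    refine ⟨EProof.split_word_mem k n hk0 α v η lam hη A hcard hsum, ?_⟩
    rw [EProof.wt_snoc_prod α v hα hv (η * lam) (mul_ne_zero hη hlam) A hsub lam,
      hcard, if_pos hlam]
    omega
  have hW0 : {c ∈ ETGRS k n α v η | hammingNorm c = n + 1 - k}
      = (fun p : F × Finset F =>
          (Fin.snoc (fun j => v j * ((η * p.1) * ∏ r ∈ p.2, (α j - r))) p.1 :
            Fin (n + 1) → F)) ''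
        ({lam : F | lam ≠ 0} ×ˢ
          {A : Finset F | ↑A ⊆ Set.range α ∧ A.card = k ∧ ∑ x ∈ A, x = -η⁻¹}) := by
    apply Set.Subset.antisymm
    · rintro c ⟨hcC, hcw⟩
      obtain ⟨a, rfl⟩ := (hmem c).1 hcC
      have ha : a ≠ 0 := by
        intro h
        rw [h, map_zero, hammingNorm_zero] at hcw
        omega
      have hwt := EProof.wt_formula k n hk0 α v hv η a
      rw [hcw] at hwt
      have hl : a (EProof.lastIdx k hk0) ≠ 0 := by
        intro h
        have h1 := hZle2 a ha h
        rw [if_neg (not_not_intro h)] at hwt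
        omega
      rw [if_pos hl] at hwt
      have hZk : (Finset.univ.filter fun j =>
          (EProof.Ppoly k hk0 η a).eval (α j) = 0).card = k := by
        have := hZle a ha
        omega
      set A := (Finset.univ.filter fun j =>
        (EProof.Ppoly k hk0 η a).eval (α j) = 0).image α with hA
      have hAcard : A.card = k := by
        rw [hA, Finset.card_image_of_injective _ hα, hZk]
      have hAsub : ↑A ⊆ Set.range α := by
        intro x hx
        obtain ⟨j, _, rfl⟩ := Finset.mem_image.1 hx
        exact ⟨j, rfl⟩
      have hroots : ∀ r ∈ A, (EProof.Ppoly k hk0 η a).eval r = 0 := by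
        intro r hr
        obtain ⟨j, hj, rfl⟩ := Finset.mem_image.1 hr
        exact (Finset.mem_filter.1 hj).2
      have hlc : (EProof.Ppoly k hk0 η a).coeff k = η * a (EProof.lastIdx k hk0) :=
        EProof.Ppoly_coeff_k k hk0 η a
      have hsplit : EProof.Ppoly k hk0 η a
          = C ((EProof.Ppoly k hk0 η a).coeff k) * ∏ r ∈ A, (X - C r) :=
        EProof.eq_split k _ (EProof.Ppoly_natDegree_le k hk0 η a) A hAcard hroots hk0
      have hsum : ∑ x ∈ A, x = -η⁻¹ := by
        have h1 : (EProof.Ppoly k hk0 η a).coeff (k - 1) = a (EProof.lastIdx k hk0) :=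
          EProof.Ppoly_coeff_pred k hk0 η a
        have h2 := congrArg (fun p : F[X] => p.coeff (k - 1)) hsplit
        simp only [coeff_C_mul] at h2
        rw [h1, hlc] at h2
        rw [show k - 1 = A.card - 1 by rw [hAcard]] at h2
        rw [EProof.gA_coeff_pred A (by rw [hAcard]; omega)] at h2
        have h3 : a (EProof.lastIdx k hk0) * (1 + η * ∑ x ∈ A, x) = 0 := by
          linear_combination h2
        have h4 : 1 + η * ∑ x ∈ A, x = 0 := (mul_eq_zero.1 h3).resolve_left hl
        apply mul_left_cancel₀ hη
        rw [mul_neg, mul_inv_cancel₀ hη]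
        linear_combination h4
      have hsplit' : EProof.Ppoly k hk0 η a
          = C (η * a (EProof.lastIdx k hk0)) * ∏ r ∈ A, (X - C r) := by
        rw [← hlc]
        exact hsplit
      have hfun : (fun j : Fin n => v j * (EProof.Ppoly k hk0 η a).eval (α j))
          = fun j => v j * ((η * a (EProof.lastIdx k hk0)) * ∏ r ∈ A, (α j - r)) := by
        funext j
        rw [hsplit', eval_mul, eval_C, EProof.gA_eval]
      refine ⟨(a (EProof.lastIdx k hk0), A), ⟨hl, hAsub, hAcard, hsum⟩, ?_⟩
      show (Fin.snoc (fun j => v j * ((η * a (EProof.lastIdx k hk0)) * ∏ r ∈ A, (α j - r)))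
        (a (EProof.lastIdx k hk0)) : Fin (n + 1) → F) = EProof.phi k n hk0 α v η a
      rw [EProof.phi_apply, hfun]
    · rintro _ ⟨⟨lam, A⟩, ⟨hlam, hAsub, hAcard, hsum⟩, rfl⟩
      exact hΨmem lam A hlam hAsub hAcard hsum
  have hinjOn : Set.InjOn
      (fun p : F × Finset F =>
        (Fin.snoc (fun j => v j * ((η * p.1) * ∏ r ∈ p.2, (α j - r))) p.1 :
          Fin (n + 1) → F))
      ({lam : F | lam ≠ 0} ×ˢ
        {A : Finset F | ↑A ⊆ Set.range α ∧ A.card = k ∧ ∑ x ∈ A, x = -η⁻¹}) := by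
    rintro ⟨l1, A1⟩ ⟨h1l, h1s, _, _⟩ ⟨l2, A2⟩ ⟨h2l, h2s, _, _⟩ heq
    simp only at heq
    have hll : l1 = l2 := by
      have := congrFun heq (Fin.last n)
      simpa [Fin.snoc_last] using this
    have hdir : ∀ (l1' l2' : F) (A1' A2' : Finset F), l2' ≠ 0 → ↑A1' ⊆ Set.range α →
        ((Fin.snoc (fun j => v j * ((η * l1') * ∏ r ∈ A1', (α j - r))) l1' :
            Fin (n + 1) → F)
          = Fin.snoc (fun j => v j * ((η * l2') * ∏ r ∈ A2', (α j - r))) l2') →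
        ∀ x ∈ A1', x ∈ A2' := by
      intro l1' l2' A1' A2' hl2 hsub1 he x hx
      obtain ⟨j, rfl⟩ := hsub1 hx
      have h1 := congrFun he (Fin.castSucc j)
      simp only [Fin.snoc_castSucc] at h1
      have hz : v j * ((η * l1') * ∏ r ∈ A1', (α j - r)) = 0 := by
        rw [(EProof.prod_sub_eq_zero_iff A1' (α j)).2 hx, mul_zero, mul_zero]
      rw [hz] at h1
      have h2 := (h1.symm)
      rcases mul_eq_zero.1 h2 with h3 | h3
      · exact absurd h3 (hv j)
      · rcases mul_eq_zero.1 h3 with h4 | h4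
        · exact absurd h4 (mul_ne_zero hη hl2)
        · exact (EProof.prod_sub_eq_zero_iff A2' (α j)).1 h4
    have hAA : A1 = A2 := by
      ext x
      constructor
      · exact fun hx => hdir l1 l2 A1 A2 h2l h1s heq x hx
      · exact fun hx => hdir l2 l1 A2 A1 h1l h2s heq.symm x hx
    exact Prod.ext hll hAA
  -- the count
  have hcount : Set.ncard {c ∈ ETGRS k n α v η | hammingNorm c = n + 1 - k} =
      (Fintype.card F - 1) * Nsub k (-η⁻¹) (Set.range α) := by
    rw [hW0, Set.ncard_image_of_injOn hinjOn]
    have hprod : ({lam : F | lam ≠ 0} ×ˢ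
        {A : Finset F | ↑A ⊆ Set.range α ∧ A.card = k ∧ ∑ x ∈ A, x = -η⁻¹}).ncard
        = ({lam : F | lam ≠ 0}).ncard *
          ({A : Finset F | ↑A ⊆ Set.range α ∧ A.card = k ∧ ∑ x ∈ A, x = -η⁻¹}).ncard := by
      rw [← Nat.card_coe_set_eq, Nat.card_congr (Equiv.Set.prod _ _), Nat.card_prod,
        Nat.card_coe_set_eq, Nat.card_coe_set_eq]
    rw [hprod]
    congr 1
    have hset : {lam : F | lam ≠ 0} = ↑((Finset.univ : Finset F) \ {0}) := by
      ext x
      simp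
    rw [hset, Set.ncard_coe_finset, Finset.card_sdiff_of_subset (Finset.subset_univ _),
      Finset.card_univ, Finset.card_singleton]
  -- finiteness / nonemptiness
  have hW0fin : {c ∈ ETGRS k n α v η | hammingNorm c = n + 1 - k}.Finite :=
    Set.toFinite _
  have hiffN : {c ∈ ETGRS k n α v η | hammingNorm c = n + 1 - k}.Nonempty ↔
      0 < Nsub k (-η⁻¹) (Set.range α) := by
    rw [← Set.ncard_pos hW0fin, hcount]
    constructor
    · intro h
      rcases Nat.eq_zero_or_pos (Nsub k (-η⁻¹) (Set.range α)) with h0 | h0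
      · rw [h0, mul_zero] at h
        omega
      · exact h0
    · intro h
      exact Nat.mul_pos (by omega) h
  -- a codeword of weight n+2-k
  obtain ⟨J0, hJ0sub, hJ0card⟩ := Finset.exists_subset_card_eq (s := (Finset.univ : Finset (Fin n)))
    (n := k - 2) (by rw [Finset.card_univ, Fintype.card_fin]; omega)
  set A0 := J0.image α with hA0
  have hA0card : A0.card = k - 2 := by
    rw [hA0, Finset.card_image_of_injective _ hα, hJ0card]
  have hA0sub : ↑A0 ⊆ Set.range α := by
    intro x hx
    obtain ⟨j, _, rfl⟩ := Finset.mem_image.1 hx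
    exact ⟨j, rfl⟩
  have hc2mem : (Fin.snoc (fun j => v j * (∏ r ∈ A0, (X - C r)).eval (α j))
      ((∏ r ∈ A0, (X - C r)).coeff (k - 1)) : Fin (n + 1) → F) ∈ ETGRS k n α v η :=
    ⟨∏ r ∈ A0, (X - C r), by rw [EProof.gA_natDegree, hA0card]; omega,
      by rw [EProof.gA_coeff_gt A0 (by omega), EProof.gA_coeff_gt A0 (by omega), mul_zero],
      rfl⟩
  have hc2eq : (Fin.snoc (fun j => v j * (∏ r ∈ A0, (X - C r)).eval (α j))
      ((∏ r ∈ A0, (X - C r)).coeff (k - 1)) : Fin (n + 1) → F)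
      = Fin.snoc (fun j => v j * ((1 : F) * ∏ r ∈ A0, (α j - r))) (0 : F) := by
    rw [EProof.gA_coeff_gt A0 (by omega)]
    have hfun2 : (fun j : Fin n => v j * (∏ r ∈ A0, (X - C r)).eval (α j))
        = fun j => v j * ((1 : F) * ∏ r ∈ A0, (α j - r)) := by
      funext j
      rw [EProof.gA_eval, one_mul]
    rw [hfun2]
  have hc2wt : hammingNorm (Fin.snoc (fun j => v j * (∏ r ∈ A0, (X - C r)).eval (α j))
      ((∏ r ∈ A0, (X - C r)).coeff (k - 1)) : Fin (n + 1) → F) = n + 2 - k := by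
    rw [hc2eq, EProof.wt_snoc_prod α v hα hv 1 one_ne_zero A0 hA0sub 0, hA0card,
      if_neg (by simp)]
    omega
  have hc2ne : (Fin.snoc (fun j => v j * (∏ r ∈ A0, (X - C r)).eval (α j))
      ((∏ r ∈ A0, (X - C r)).coeff (k - 1)) : Fin (n + 1) → F) ≠ 0 := by
    intro h
    rw [h, hammingNorm_zero] at hc2wt
    omega
  have hWSne : Set.Nonempty {w | ∃ c ∈ ETGRS k n α v η, c ≠ 0 ∧ hammingNorm c = w} :=
    ⟨_, _, hc2mem, hc2ne, rfl⟩
  have hminrfl : minWt (ETGRS k n α v η)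
      = sInf {w | ∃ c ∈ ETGRS k n α v η, c ≠ 0 ∧ hammingNorm c = w} := rfl
  have hmin1 : 0 < Nsub k (-η⁻¹) (Set.range α) → minWt (ETGRS k n α v η) = n + 1 - k := by
    intro hN
    obtain ⟨c, hcC, hcw⟩ := hiffN.2 hN
    have hc0 : c ≠ 0 := by
      intro h
      rw [h, hammingNorm_zero] at hcw
      omega
    rw [hminrfl]
    apply le_antisymm
    · exact Nat.sInf_le ⟨c, hcC, hc0, hcw⟩
    · obtain ⟨c', hc'C, hc'0, hc'w⟩ := Nat.sInf_mem hWSne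
      rw [← hc'w]
      exact hLB c' hc'C hc'0
  have hmin2 : Nsub k (-η⁻¹) (Set.range α) = 0 → minWt (ETGRS k n α v η) = n + 2 - k := by
    intro hN
    have hempty : {c ∈ ETGRS k n α v η | hammingNorm c = n + 1 - k} = ∅ := by
      rw [← Set.ncard_eq_zero hW0fin, hcount, hN, mul_zero]
    rw [hminrfl]
    apply le_antisymm
    · exact Nat.sInf_le ⟨_, hc2mem, hc2ne, hc2wt⟩
    · obtain ⟨c', hc'C, hc'0, hc'w⟩ := Nat.sInf_mem hWSne
      rw [← hc'w]
      apply hLB2 c' hc'C hc'0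
      intro heq
      have hmem' : c' ∈ {c ∈ ETGRS k n α v η | hammingNorm c = n + 1 - k} := ⟨hc'C, heq⟩
      rw [hempty] at hmem'
      exact hmem'
  -- dual dimension
  have hdd : codeDim (dualCode (ETGRS k n α v η)) = n + 1 - k := by
    rw [codeDim, EProof.dual_eq_ker k n hk0 α v η, Submodule.span_eq]
    have h1 := LinearMap.finrank_range_add_finrank_ker (EProof.psi k n hk0 α v η)
    rw [EProof.psi_surj k n hk0 hkn α v hα hv η, finrank_top, Module.finrank_pi,
      Module.finrank_pi, Fintype.card_fin, Fintype.card_fin] at h1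
    omega
  refine ⟨hdim, ?_, hcount, ?_, ?_⟩
  · rcases Nat.eq_zero_or_pos (Nsub k (-η⁻¹) (Set.range α)) with h | h
    · right
      exact hmin2 h
    · left
      exact hmin1 h
  · constructor
    · intro hM
      by_contra hN0
      have hN : 0 < Nsub k (-η⁻¹) (Set.range α) := Nat.pos_of_ne_zero hN0
      have hMeq : minWt (ETGRS k n α v η)
          = (n + 1) - codeDim (ETGRS k n α v η) + 1 := hM
      rw [hdim, hmin1 hN] at hMeq
      omega
    · intro hN
      show minWt (ETGRS k n α v η) = (n + 1) - codeDim (ETGRS k n α v η) + 1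
      rw [hdim, hmin2 hN]
      omega
  · constructor
    · rintro ⟨h1, _⟩
      by_contra hN0
      have hN : Nsub k (-η⁻¹) (Set.range α) = 0 := by omega
      have h1' : minWt (ETGRS k n α v η)
          = (n + 1) - codeDim (ETGRS k n α v η) := h1
      rw [hdim, hmin2 hN] at h1'
      omega
    · intro hN
      obtain ⟨A, hAs, hAc, hAsum⟩ :
          Set.Nonempty {A : Finset F | ↑A ⊆ Set.range α ∧ A.card = k ∧ ∑ x ∈ A, x = -η⁻¹} :=
        Set.nonempty_of_ncard_ne_zero (by
          show Nsub k (-η⁻¹) (Set.range α) ≠ 0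
          omega)
      constructor
      · show minWt (ETGRS k n α v η) = (n + 1) - codeDim (ETGRS k n α v η)
        rw [hdim, hmin1 hN]
      · show minWt (dualCode (ETGRS k n α v η))
          = (n + 1) - codeDim (dualCode (ETGRS k n α v η))
        rw [hdd, show (n + 1) - (n + 1 - k) = k by omega]
        obtain ⟨x, hxd, hx0, hxw⟩ :=
          EProof.dual_word k n hk0 α v hα hv η hη A hAs hAc hAsum
        have hdrfl : minWt (dualCode (ETGRS k n α v η))
            = sInf {w | ∃ c ∈ dualCode (ETGRS k n α v η), c ≠ 0 ∧ hammingNorm c = w} := rfl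
        rw [hdrfl]
        apply le_antisymm
        · exact le_trans (Nat.sInf_le ⟨x, hxd, hx0, rfl⟩) hxw
        · have hne : Set.Nonempty
              {w | ∃ c ∈ dualCode (ETGRS k n α v η), c ≠ 0 ∧ hammingNorm c = w} :=
            ⟨_, x, hxd, hx0, rfl⟩
          obtain ⟨x', hx'd, hx'0, hx'w⟩ := Nat.sInf_mem hne
          rw [← hx'w]
          by_contra hlt
          exact hx'0 (EProof.dual_lb k n hk0 hk α v hα hv η x' hx'd (by omega))
end

section
/- Let q be a prime power, let C ⊆ F_q^n be a linear code, let m ≤ n, let I = {i_1 < i_2 < … < i_m} ⊆ {1,…,n}, and let v = (v_1,…,v_m) with all v_j ∈ F_q^*. Then the linear code {(v_1·c_{i_1}, …, v_m·c_{i_m}) : (c_1,…,c_n) ∈ C} ⊆ F_q^m is self-orthogonal if and only if the vector w ∈ F_q^n defined by w_{i_j} = v_j² for j = 1,…,m and w_i = 0 for i ∉ I belongs to (C²)^⊥. -/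
open Polynomial

/-- self-orthogonality criterion for scaled punctured codes. -/
theorem stmt5 {F : Type*} [Field F] [Fintype F] [DecidableEq F] {n m : ℕ}
    (hmn : m ≤ n)
    (C : Submodule F (Fin n → F))
    (ι : Fin m → Fin n) (hι : StrictMono ι)
    (v : Fin m → F) (hv : ∀ j, v j ≠ 0)
    (w : Fin n → F)
    (hw1 : ∀ j, w (ι j) = v j ^ 2)
    (hw2 : ∀ i, i ∉ Set.range ι → w i = 0) :
    selfOrthogonal {d : Fin m → F | ∃ c ∈ C, d = fun j => v j * c (ι j)} ↔
      w ∈ dualCode (schurSq (C : Set (Fin n → F))) := by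
  have key : ∀ c1 c2 : Fin n → F,
      ∑ i, w i * (c1 i * c2 i) = ∑ j, (v j * c1 (ι j)) * (v j * c2 (ι j)) := by
    intro c1 c2
    have h1 : ∑ i, w i * (c1 i * c2 i)
        = ∑ i ∈ Finset.univ.image ι, w i * (c1 i * c2 i) := by
      refine (Finset.sum_subset (Finset.subset_univ _) ?_).symm
      intro i _ hi
      have : i ∉ Set.range ι := by
        simpa [Finset.mem_image, Set.mem_range] using hi
      rw [hw2 i this, zero_mul]
    rw [h1, Finset.sum_image (fun a _ b _ h => hι.injective h)]
    refine Finset.sum_congr rfl fun j _ => ?_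
    rw [hw1 j]; ring
  constructor
  · intro h
    intro x hx
    refine Submodule.span_induction ?_ ?_ ?_ ?_ hx
    · rintro x ⟨c1, hc1, c2, hc2, rfl⟩
      have hd1 : (fun j => v j * c1 (ι j)) ∈
          {d : Fin m → F | ∃ c ∈ C, d = fun j => v j * c (ι j)} := ⟨c1, hc1, rfl⟩
      have hd2 : (fun j => v j * c2 (ι j)) ∈
          {d : Fin m → F | ∃ c ∈ C, d = fun j => v j * c (ι j)} := ⟨c2, hc2, rfl⟩
      have := h hd1 _ hd2
      simpa [Pi.mul_apply, key c1 c2] using (key c1 c2).trans this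
    · simp
    · intro a b _ _ ha hb
      simp only [Pi.add_apply, mul_add, Finset.sum_add_distrib, ha, hb, add_zero]
    · intro r a _ ha
      simp only [Pi.smul_apply, smul_eq_mul]
      calc ∑ i, w i * (r * a i) = r * ∑ i, w i * a i := by
            rw [Finset.mul_sum]; exact Finset.sum_congr rfl fun i _ => by ring
        _ = 0 := by rw [ha, mul_zero]
  · rintro h d ⟨c1, hc1, rfl⟩ d' ⟨c2, hc2, rfl⟩
    have hmem : c1 * c2 ∈ schurSq (C : Set (Fin n → F)) :=
      Submodule.subset_span ⟨c1, hc1, c2, hc2, rfl⟩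
    have := h _ hmem
    simp only [Pi.mul_apply] at this
    rw [← key c1 c2]
    exact this
end

section
/- Let 3 ≤ k < n ≤ q, let α = (α_1,…,α_n) ∈ F_q^n have pairwise distinct entries, let v = (v_1,…,v_n) with all v_i ∈ F_q^*, and let η ∈ F_q^*. Then: (1) if 2k ≥ n+1, the Schur square C_{k,n}(α,v,η,∞)² equals all of F_q^{n+1}; (2) if 2k ≤ n, the Schur square C_{k,n}(α,1,η,∞)² (where 1 = (1,…,1)) equals the F_q-linear span of the vectors (α_1^i, …, α_n^i, 0) for i = 0,1,…,2k−2 together with the vector (2η·α_1^{2k−1} + η²·α_1^{2k}, …, 2η·α_n^{2k−1} + η²·α_n^{2k}, 1). -/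
open Polynomial

noncomputable section
set_option linter.unusedSectionVars false

variable {F : Type*} [Field F]

def PS6 (k n : ℕ) (α v : Fin n → F) (η : F) : Set (Fin (n + 1) → F) :=
  {x | ∃ c1 ∈ ETGRS k n α v η, ∃ c2 ∈ ETGRS k n α v η, x = c1 * c2}

lemma snoc_ext6 {n : ℕ} {a b : Fin n → F} {s t : F}
    (h1 : ∀ j, a j = b j) (h2 : s = t) :
    (Fin.snoc a s : Fin (n+1) → F) = Fin.snoc b t := by
  funext i
  induction i using Fin.lastCases with
  | last => simpa
  | cast j => simpa using h1 j

lemma prodvec_mem6 {k n : ℕ} (α v : Fin n → F) (η : F)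
    {f g : F[X]} (hf1 : f.natDegree ≤ k) (hf2 : f.coeff k = η * f.coeff (k-1))
    (hg1 : g.natDegree ≤ k) (hg2 : g.coeff k = η * g.coeff (k-1)) :
    (Fin.snoc (fun j => (v j * f.eval (α j)) * (v j * g.eval (α j)))
      (f.coeff (k-1) * g.coeff (k-1)) : Fin (n+1) → F) ∈ PS6 k n α v η := by
  refine ⟨_, ⟨f, hf1, hf2, rfl⟩, _, ⟨g, hg1, hg2, rfl⟩, ?_⟩
  funext i
  induction i using Fin.lastCases with
  | last => simp
  | cast j => simp

lemma evalvec_mem6 {n d : ℕ} (α w : Fin n → F) (h : F[X]) (hd : h.natDegree ≤ d)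
    (S : Submodule F (Fin (n+1) → F))
    (hS : ∀ i ≤ d, (Fin.snoc (fun j => w j * α j ^ i) 0 : Fin (n+1) → F) ∈ S) :
    (Fin.snoc (fun j => w j * h.eval (α j)) 0 : Fin (n+1) → F) ∈ S := by
  have key : (Fin.snoc (fun j => w j * h.eval (α j)) 0 : Fin (n+1) → F)
      = ∑ i ∈ Finset.range (d+1), h.coeff i •
          (Fin.snoc (fun j => w j * α j ^ i) 0 : Fin (n+1) → F) := by
    funext idx
    rw [Finset.sum_apply]
    induction idx using Fin.lastCases with
    | last => simp
    | cast j =>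
      simp only [Fin.snoc_castSucc, Pi.smul_apply, smul_eq_mul]
      rw [eval_eq_sum_range' (Nat.lt_succ_of_le hd), Finset.mul_sum]
      exact Finset.sum_congr rfl fun i _ => by ring
  rw [key]
  exact Submodule.sum_mem _ fun i hi =>
    Submodule.smul_mem _ _ (hS i (Nat.lt_succ_iff.mp (Finset.mem_range.mp hi)))

lemma anyvec_mem6 {n d : ℕ} {α : Fin n → F} (hα : Function.Injective α)
    {w : Fin n → F} (hw : ∀ j, w j ≠ 0) (hnd : n ≤ d + 1)
    (S : Submodule F (Fin (n+1) → F))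
    (hS : ∀ i ≤ d, (Fin.snoc (fun j => w j * α j ^ i) 0 : Fin (n+1) → F) ∈ S)
    (x : Fin n → F) :
    (Fin.snoc x 0 : Fin (n+1) → F) ∈ S := by
  set f := Lagrange.interpolate Finset.univ α (fun j => x j / w j) with hf
  have hdeg : f.natDegree ≤ d := by
    rcases eq_or_ne f 0 with h0 | h0
    · simp [h0]
    · have hd2 := Lagrange.degree_interpolate_lt (s := Finset.univ) (fun j => x j / w j) hα.injOn
      rw [← hf] at hd2
      have hlt : f.natDegree < n := by
        rw [natDegree_lt_iff_degree_lt h0]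
        simpa using hd2
      omega
  have hx : (Fin.snoc x 0 : Fin (n+1) → F)
      = Fin.snoc (fun j => w j * f.eval (α j)) 0 := by
    refine snoc_ext6 (fun j => ?_) rfl
    rw [hf, Lagrange.eval_interpolate_at_node _ hα.injOn (Finset.mem_univ j)]
    rw [mul_div_cancel₀ _ (hw j)]
  rw [hx]; exact evalvec_mem6 α w f hdeg S hS

lemma Xpow_nd6 {k a : ℕ} (ha : a + 1 < k) : ((X:F[X])^a).natDegree ≤ k := by
  rw [natDegree_X_pow]; omega

lemma Xpow_c16 {k a : ℕ} (ha : a + 1 < k) (η : F) :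
    ((X:F[X])^a).coeff k = η * ((X:F[X])^a).coeff (k-1) := by
  rw [coeff_X_pow, coeff_X_pow, if_neg (by omega), if_neg (by omega), mul_zero]

lemma Xpow_c26 {k a : ℕ} (ha : a + 1 < k) :
    ((X:F[X])^a).coeff (k-1) = 0 := by
  rw [coeff_X_pow, if_neg (by omega)]

lemma tp_nd6 {k : ℕ} (η : F) : ((X:F[X])^(k-1) + C η * X^k).natDegree ≤ k :=
  (natDegree_add_le _ _).trans (max_le (by rw [natDegree_X_pow]; omega)
    ((natDegree_C_mul_le _ _).trans (by rw [natDegree_X_pow])))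

lemma tp_ck6 {k : ℕ} (hk : 1 ≤ k) (η : F) :
    ((X:F[X])^(k-1) + C η * X^k).coeff k = η := by
  rw [coeff_add, coeff_X_pow, coeff_C_mul, coeff_X_pow, if_neg (by omega), if_pos rfl]; ring

lemma tp_ckm6 {k : ℕ} (hk : 1 ≤ k) (η : F) :
    ((X:F[X])^(k-1) + C η * X^k).coeff (k-1) = 1 := by
  rw [coeff_add, coeff_X_pow, coeff_C_mul, coeff_X_pow, if_pos rfl, if_neg (by omega)]; ring

lemma tp_c16 {k : ℕ} (hk : 1 ≤ k) (η : F) :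
    ((X:F[X])^(k-1) + C η * X^k).coeff k
      = η * ((X:F[X])^(k-1) + C η * X^k).coeff (k-1) := by
  rw [tp_ck6 hk, tp_ckm6 hk, mul_one]

lemma tp_eval6 {k : ℕ} (η x : F) :
    ((X:F[X])^(k-1) + C η * X^k).eval x = x^(k-1) + η * x^k := by simp

lemma powvec_mem6 {k n : ℕ} (hk : 3 ≤ k) (α v : Fin n → F) (η : F) (hη : η ≠ 0) :
    ∀ i ≤ 2*k-2, (Fin.snoc (fun j => (v j * v j) * α j ^ i) 0 : Fin (n+1) → F)
      ∈ Submodule.span F (PS6 k n α v η) := by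
  set S := Submodule.span F (PS6 k n α v η) with hSdef
  have hmono : ∀ i, i ≤ 2*k-4 →
      (Fin.snoc (fun j => (v j * v j) * α j ^ i) 0 : Fin (n+1) → F) ∈ S := by
    intro i hi
    obtain ⟨a, b, ha, hb, hab⟩ : ∃ a b, a+1 < k ∧ b+1 < k ∧ a + b = i :=
      ⟨min i (k-2), i - min i (k-2), by omega, by omega, by omega⟩
    have hm := prodvec_mem6 α v η (Xpow_nd6 ha) (Xpow_c16 ha η) (Xpow_nd6 hb) (Xpow_c16 hb η)
    have he : (Fin.snoc (fun j => (v j * eval (α j) ((X:F[X])^a)) * (v j * eval (α j) ((X:F[X])^b)))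
        (((X:F[X])^a).coeff (k-1) * ((X:F[X])^b).coeff (k-1)) : Fin (n+1) → F)
        = Fin.snoc (fun j => (v j * v j) * α j ^ i) 0 := by
      refine snoc_ext6 (fun j => ?_) ?_
      · rw [eval_pow, eval_pow, eval_X, ← hab, pow_add]; ring
      · rw [Xpow_c26 ha, Xpow_c26 hb, mul_zero]
    rw [← he]
    exact Submodule.subset_span hm
  have hmix : ∀ w, w + 1 < k →
      (Fin.snoc (fun j => (v j * v j) * (α j ^ (k-1+w) + η * α j ^ (k+w))) 0 : Fin (n+1) → F) ∈ S := by
    intro w hw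
    have hm := prodvec_mem6 α v η (tp_nd6 η) (tp_c16 (by omega) η) (Xpow_nd6 hw) (Xpow_c16 hw η)
    have he : (Fin.snoc (fun j => (v j * eval (α j) ((X:F[X])^(k-1) + C η * X^k)) * (v j * eval (α j) ((X:F[X])^w)))
        (((X:F[X])^(k-1) + C η * X^k).coeff (k-1) * ((X:F[X])^w).coeff (k-1)) : Fin (n+1) → F)
        = Fin.snoc (fun j => (v j * v j) * (α j ^ (k-1+w) + η * α j ^ (k+w))) 0 := by
      refine snoc_ext6 (fun j => ?_) ?_
      · rw [tp_eval6, eval_pow, eval_X, pow_add, pow_add]; ring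
      · rw [Xpow_c26 hw, mul_zero]
    rw [← he]
    exact Submodule.subset_span hm
  have hchain : ∀ w, w + 1 < k →
      (Fin.snoc (fun j => (v j * v j) * α j ^ (k-1+w)) 0 : Fin (n+1) → F) ∈ S →
      (Fin.snoc (fun j => (v j * v j) * α j ^ (k+w)) 0 : Fin (n+1) → F) ∈ S := by
    intro w hw h1
    have h2 := hmix w hw
    have he : (Fin.snoc (fun j => (v j * v j) * α j ^ (k+w)) 0 : Fin (n+1) → F)
        = η⁻¹ • ((Fin.snoc (fun j => (v j * v j) * (α j ^ (k-1+w) + η * α j ^ (k+w))) 0 : Fin (n+1) → F)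
            - Fin.snoc (fun j => (v j * v j) * α j ^ (k-1+w)) 0) := by
      funext idx
      induction idx using Fin.lastCases with
      | last => simp
      | cast j =>
        simp only [Pi.smul_apply, Pi.sub_apply, Fin.snoc_castSucc, smul_eq_mul]
        field_simp
        ring
    rw [he]
    exact Submodule.smul_mem _ _ (Submodule.sub_mem _ h2 h1)
  intro i hi
  rcases (by omega : i ≤ 2*k-4 ∨ i = 2*k-3 ∨ i = 2*k-2) with h | h | h
  · exact hmono i h
  · have h0 : (Fin.snoc (fun j => (v j * v j) * α j ^ (k-1+(k-3))) 0 : Fin (n+1) → F) ∈ S := by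
      rw [show k-1+(k-3) = 2*k-4 by omega]; exact hmono _ le_rfl
    have := hchain (k-3) (by omega) h0
    rwa [show k+(k-3) = i by omega] at this
  · have h0 : (Fin.snoc (fun j => (v j * v j) * α j ^ (k-1+(k-2))) 0 : Fin (n+1) → F) ∈ S := by
      rw [show k-1+(k-2) = 2*k-3 by omega]
      have h1 : (Fin.snoc (fun j => (v j * v j) * α j ^ (k-1+(k-3))) 0 : Fin (n+1) → F) ∈ S := by
        rw [show k-1+(k-3) = 2*k-4 by omega]; exact hmono _ le_rfl
      have := hchain (k-3) (by omega) h1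
      rwa [show k+(k-3) = 2*k-3 by omega] at this
    have := hchain (k-2) (by omega) h0
    rwa [show k+(k-2) = i by omega] at this

lemma ttvec_mem6 {k n : ℕ} (hk : 3 ≤ k) (α v : Fin n → F) (η : F) :
    (Fin.snoc (fun j => (v j * v j) * (α j ^ (2*k-2) + 2*η*α j ^ (2*k-1) + η^2 * α j ^ (2*k))) 1
      : Fin (n+1) → F) ∈ PS6 k n α v η := by
  have hm := prodvec_mem6 α v η (tp_nd6 (k := k) η) (tp_c16 (by omega) η)
    (tp_nd6 (k := k) η) (tp_c16 (by omega) η)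
  have he : (Fin.snoc (fun j => (v j * eval (α j) ((X:F[X])^(k-1) + C η * X^k)) * (v j * eval (α j) ((X:F[X])^(k-1) + C η * X^k)))
      (((X:F[X])^(k-1) + C η * X^k).coeff (k-1) * ((X:F[X])^(k-1) + C η * X^k).coeff (k-1)) : Fin (n+1) → F)
      = Fin.snoc (fun j => (v j * v j) * (α j ^ (2*k-2) + 2*η*α j ^ (2*k-1) + η^2 * α j ^ (2*k))) 1 := by
    refine snoc_ext6 (fun j => ?_) ?_
    · rw [tp_eval6, show 2*k-2 = (k-1)+(k-1) by omega, show 2*k-1 = (k-1)+k by omega,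
        show 2*k = k+k by omega, pow_add, pow_add, pow_add]
      ring
    · rw [tp_ckm6 (by omega), mul_one]
  rw [← he]
  exact hm

lemma trunc_nd6 {k : ℕ} (hk : 1 ≤ k) {η : F} {f : F[X]} (hf1 : f.natDegree ≤ k)
    (hf2 : f.coeff k = η * f.coeff (k-1)) :
    (f - C (f.coeff (k-1)) * ((X:F[X])^(k-1) + C η * X^k)).natDegree ≤ k - 2 := by
  rw [natDegree_le_iff_coeff_eq_zero]
  intro N hN
  rw [coeff_sub, coeff_C_mul, coeff_add, coeff_X_pow, coeff_C_mul, coeff_X_pow]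
  rcases (by omega : N = k-1 ∨ N = k ∨ k < N) with h | h | h
  · subst h; rw [if_pos rfl, if_neg (by omega)]; ring
  · subst h
    rw [if_neg (by omega), if_pos rfl, hf2]; ring
  · rw [if_neg (by omega), if_neg (by omega),
      coeff_eq_zero_of_natDegree_lt (lt_of_le_of_lt hf1 h)]
    ring

lemma fg_decomp6 {k : ℕ} (hk : 3 ≤ k) (η : F) (f g : F[X]) :
    f * g - C (f.coeff (k-1) * g.coeff (k-1)) *
        (C (2*η) * X^(2*k-1) + C (η^2) * X^(2*k))
      = (f - C (f.coeff (k-1)) * ((X:F[X])^(k-1) + C η * X^k))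
          * (g - C (g.coeff (k-1)) * ((X:F[X])^(k-1) + C η * X^k))
        + C (f.coeff (k-1)) * ((X:F[X])^(k-1) + C η * X^k)
          * (g - C (g.coeff (k-1)) * ((X:F[X])^(k-1) + C η * X^k))
        + C (g.coeff (k-1)) * ((X:F[X])^(k-1) + C η * X^k)
          * (f - C (f.coeff (k-1)) * ((X:F[X])^(k-1) + C η * X^k))
        + C (f.coeff (k-1) * g.coeff (k-1)) * X^(2*k-2) := by
  rw [show 2*k-2 = (k-1)+(k-1) by omega, show 2*k-1 = (k-1)+k by omega,
    show 2*k = k+k by omega, pow_add, pow_add, pow_add]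
  simp only [C_mul, C_pow, map_ofNat]
  ring

end

/-- Schur square of the (+)-ETGRS code. -/
theorem stmt6 {F : Type*} [Field F] [Fintype F] [DecidableEq F] {k n : ℕ}
    (hk : 3 ≤ k) (hkn : k < n) (hn : n ≤ Fintype.card F)
    (α : Fin n → F) (hα : Function.Injective α)
    (v : Fin n → F) (hv : ∀ i, v i ≠ 0)
    (η : F) (hη : η ≠ 0) :
    (n + 1 ≤ 2 * k → schurSq (ETGRS k n α v η) = Set.univ) ∧
    (2 * k ≤ n →
      schurSq (ETGRS k n α (fun _ => 1) η) =
        ↑(Submodule.span F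
          (((fun i : ℕ => (Fin.snoc (fun j => α j ^ i) 0 : Fin (n + 1) → F)) ''
              {i | i ≤ 2 * k - 2}) ∪
            {(Fin.snoc (fun j => 2 * η * α j ^ (2 * k - 1) + η ^ 2 * α j ^ (2 * k)) 1 :
                Fin (n + 1) → F)}))) := by
  constructor
  · intro h2k
    show (Submodule.span F (PS6 k n α v η) : Set (Fin (n+1) → F)) = Set.univ
    suffices hT : Submodule.span F (PS6 k n α v η) = ⊤ by rw [hT]; exact Submodule.top_coe
    rw [eq_top_iff]
    rintro y -
    have hz : ∀ z : Fin n → F,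
        (Fin.snoc z 0 : Fin (n+1) → F) ∈ Submodule.span F (PS6 k n α v η) :=
      anyvec_mem6 hα (fun j => mul_ne_zero (hv j) (hv j)) (by omega)
        _ (fun i hi => powvec_mem6 hk α v η hη i hi)
    set T : Fin (n+1) → F := Fin.snoc
      (fun j => (v j * v j) * (α j ^ (2*k-2) + 2*η*α j ^ (2*k-1) + η^2 * α j ^ (2*k))) 1
      with hTdef
    have hT : T ∈ Submodule.span F (PS6 k n α v η) :=
      Submodule.subset_span (ttvec_mem6 hk α v η)
    have hy : y = (Fin.snoc (fun j => y j.castSucc - y (Fin.last n) * T j.castSucc) 0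
        : Fin (n+1) → F) + y (Fin.last n) • T := by
      funext idx
      induction idx using Fin.lastCases with
      | last => simp [hTdef]
      | cast j => simp
    rw [hy]
    exact Submodule.add_mem _ (hz _) (Submodule.smul_mem _ _ hT)
  · intro h2kn
    have key : Submodule.span F (PS6 k n α (fun _ => 1) η)
        = Submodule.span F
          (((fun i : ℕ => (Fin.snoc (fun j => α j ^ i) 0 : Fin (n + 1) → F)) ''
              {i | i ≤ 2 * k - 2}) ∪
            {(Fin.snoc (fun j => 2 * η * α j ^ (2 * k - 1) + η ^ 2 * α j ^ (2 * k)) 1 :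
                Fin (n + 1) → F)}) := by
      apply le_antisymm
      · refine Submodule.span_le.mpr ?_
        rintro x ⟨c1, ⟨f, hf1, hf2, hc1⟩, c2, ⟨g, hg1, hg2, hc2⟩, rfl⟩
        set h : F[X] := f * g - C (f.coeff (k-1) * g.coeff (k-1)) *
          (C (2*η) * X^(2*k-1) + C (η^2) * X^(2*k)) with hh
        have hdeg : h.natDegree ≤ 2*k-2 := by
          rw [hh, fg_decomp6 hk η f g]
          have d1 := trunc_nd6 (by omega : 1 ≤ k) hf1 hf2
          have d2 := trunc_nd6 (by omega : 1 ≤ k) hg1 hg2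
          have dt : ((X:F[X])^(k-1) + C η * X^k).natDegree ≤ k := tp_nd6 η
          refine (natDegree_add_le _ _).trans (max_le ((natDegree_add_le _ _).trans
            (max_le ((natDegree_add_le _ _).trans (max_le ?_ ?_)) ?_)) ?_)
          · exact natDegree_mul_le.trans ((add_le_add d1 d2).trans (by omega))
          · exact natDegree_mul_le.trans ((add_le_add
              ((natDegree_C_mul_le _ _).trans dt) d2).trans (by omega))
          · exact natDegree_mul_le.trans ((add_le_add
              ((natDegree_C_mul_le _ _).trans dt) d1).trans (by omega))
          · exact (natDegree_C_mul_le _ _).trans (by rw [natDegree_X_pow])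
        have hx : c1 * c2 = (Fin.snoc (fun j => (1:F) * h.eval (α j)) 0 : Fin (n+1) → F)
            + (f.coeff (k-1) * g.coeff (k-1)) •
              (Fin.snoc (fun j => 2 * η * α j ^ (2 * k - 1) + η ^ 2 * α j ^ (2 * k)) 1
                : Fin (n+1) → F) := by
          funext idx
          rw [Pi.mul_apply, hc1, hc2]
          induction idx using Fin.lastCases with
          | last => simp
          | cast j =>
            simp only [Pi.add_apply, Pi.smul_apply, Fin.snoc_castSucc, smul_eq_mul, hh,
              eval_sub, eval_mul, eval_add, eval_C, eval_pow, eval_X]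
            ring
        rw [hx]
        refine Submodule.add_mem _ ?_ (Submodule.smul_mem _ _ (Submodule.subset_span
          (Set.mem_union_right _ rfl)))
        refine evalvec_mem6 α (fun _ => (1:F)) h hdeg _ ?_
        intro i hi
        show (Fin.snoc (fun j => (1:F) * α j ^ i) 0 : Fin (n+1) → F) ∈ _
        have he : (Fin.snoc (fun j => (1:F) * α j ^ i) 0 : Fin (n+1) → F)
            = Fin.snoc (fun j => α j ^ i) 0 := snoc_ext6 (fun j => one_mul _) rfl
        rw [he]
        exact Submodule.subset_span (Set.mem_union_left _ ⟨i, hi, rfl⟩)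
      · refine Submodule.span_le.mpr ?_
        rintro x (⟨i, hi, rfl⟩ | rfl)
        · show (Fin.snoc (fun j => α j ^ i) 0 : Fin (n+1) → F) ∈
            (Submodule.span F (PS6 k n α (fun _ => 1) η) : Set (Fin (n+1) → F))
          have hp := powvec_mem6 hk α (fun _ => 1) η hη i hi
          have he : (Fin.snoc (fun j => ((1:F) * 1) * α j ^ i) 0 : Fin (n+1) → F)
              = Fin.snoc (fun j => α j ^ i) 0 := snoc_ext6 (fun j => by ring) rfl
          rw [← he]
          exact hp
        · have h1 : (Fin.snoc (fun j => ((1:F) * 1) *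
              (α j ^ (2*k-2) + 2*η*α j ^ (2*k-1) + η^2 * α j ^ (2*k))) 1 : Fin (n+1) → F)
              ∈ Submodule.span F (PS6 k n α (fun _ => 1) η) :=
            Submodule.subset_span (ttvec_mem6 hk α (fun _ => 1) η)
          have h2 := powvec_mem6 hk α (fun _ => 1) η hη (2*k-2) le_rfl
          have he : (Fin.snoc (fun j => 2 * η * α j ^ (2 * k - 1) + η ^ 2 * α j ^ (2 * k)) 1
              : Fin (n+1) → F)
              = (Fin.snoc (fun j => ((1:F) * 1) *
                  (α j ^ (2*k-2) + 2*η*α j ^ (2*k-1) + η^2 * α j ^ (2*k))) 1 : Fin (n+1) → F)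
                - Fin.snoc (fun j => ((1:F) * 1) * α j ^ (2*k-2)) 0 := by
            funext idx
            induction idx using Fin.lastCases with
            | last => simp
            | cast j =>
              simp only [Pi.sub_apply, Fin.snoc_castSucc]
              ring
          rw [he]
          exact Submodule.sub_mem _ h1 h2
    exact congrArg (fun S : Submodule F (Fin (n+1) → F) => (S : Set (Fin (n+1) → F))) key
end

section
/- Let q be a prime power, let 3 ≤ l ≤ k ≤ q/2 with k < n ≤ q, let α = (α_1,…,α_n) ∈ F_q^n have pairwise distinct entries, let v = (v_1,…,v_n) with all v_i ∈ F_q^*, and let η ∈ F_q^*. If the (+)-TGRS code C_{k,n}(α,v,η) is self-orthogonal, then the (+)-TGRS code C_{l,n}(α,v,η) is self-orthogonal. -/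
open Polynomial

/-- self-orthogonality of (+)-TGRS codes descends to smaller dimension. -/
theorem stmt10 {F : Type*} [Field F] [Fintype F] [DecidableEq F] {l k n : ℕ}
    (hl : 3 ≤ l) (hlk : l ≤ k) (hk2 : 2 * k ≤ Fintype.card F)
    (hkn : k < n) (hn : n ≤ Fintype.card F)
    (α : Fin n → F) (hα : Function.Injective α)
    (v : Fin n → F) (hv : ∀ i, v i ≠ 0)
    (η : F) (hη : η ≠ 0)
    (h : selfOrthogonal (TGRS k n α v η)) :
    selfOrthogonal (TGRS l n α v η) := by
  have hk3 : 3 ≤ k := le_trans hl hlk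
  -- inner-product relation coming from self-orthogonality of the big code
  have key : ∀ f g : Polynomial F, f.natDegree ≤ k → f.coeff k = η * f.coeff (k-1) →
      g.natDegree ≤ k → g.coeff k = η * g.coeff (k-1) →
      ∑ i, (v i * f.eval (α i)) * (v i * g.eval (α i)) = 0 := by
    intro f g hf hfc hg hgc
    have h1 : (fun j => v j * f.eval (α j)) ∈ TGRS k n α v η := ⟨f, hf, hfc, rfl⟩
    have h2 : (fun j => v j * g.eval (α j)) ∈ TGRS k n α v η := ⟨g, hg, hgc, rfl⟩
    exact h h1 _ h2
  -- power sums
  set S : ℕ → F := fun m => ∑ i, v i ^ 2 * α i ^ m with hSdef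
  have hmono : ∀ a b : ℕ, a ≤ k - 2 → b ≤ k - 2 → S (a + b) = 0 := by
    intro a b ha hb
    have hkey := key (X ^ a) (X ^ b) (by simpa using by omega : (X ^ a : Polynomial F).natDegree ≤ k)
      (by rw [coeff_X_pow, coeff_X_pow, if_neg (by omega), if_neg (by omega), mul_zero])
      (by simpa using by omega : (X ^ b : Polynomial F).natDegree ≤ k)
      (by rw [coeff_X_pow, coeff_X_pow, if_neg (by omega), if_neg (by omega), mul_zero])
    rw [hSdef]
    rw [← hkey]
    apply Finset.sum_congr rfl
    intro i _
    simp only [eval_pow, eval_X]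
    ring
  have hrel : ∀ j : ℕ, j ≤ k - 2 → S (k - 1 + j) + η * S (k + j) = 0 := by
    intro j hj
    have hf1 : (X ^ (k-1) + C η * X ^ k : Polynomial F).natDegree ≤ k := by
      apply le_trans (natDegree_add_le _ _)
      simp only [max_le_iff]
      constructor
      · simpa using by omega
      · exact le_trans (natDegree_C_mul_le _ _) (by simp)
    have hf2 : (X ^ (k-1) + C η * X ^ k : Polynomial F).coeff k
        = η * (X ^ (k-1) + C η * X ^ k : Polynomial F).coeff (k-1) := by
      simp [coeff_X_pow]
      rw [if_neg (by omega), if_neg (by omega)]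
      ring
    have hkey := key (X ^ (k-1) + C η * X ^ k) (X ^ j) hf1 hf2
      (by simpa using by omega)
      (by rw [coeff_X_pow, coeff_X_pow, if_neg (by omega), if_neg (by omega), mul_zero])
    rw [hSdef]
    rw [← hkey, Finset.mul_sum, ← Finset.sum_add_distrib]
    apply Finset.sum_congr rfl
    intro i _
    simp only [eval_add, eval_mul, eval_C, eval_pow, eval_X]
    ring
  have hS1 : ∀ m : ℕ, m ≤ 2*k - 4 → S m = 0 := by
    intro m hm
    have h1 : min m (k-2) ≤ k - 2 := min_le_right _ _
    have h2 : m - min m (k-2) ≤ k - 2 := by omega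
    have := hmono _ _ h1 h2
    rwa [Nat.add_sub_cancel' (min_le_left _ _)] at this
  have hS2 : S (2*k - 3) = 0 := by
    have hr := hrel (k - 3) (by omega)
    have e1 : k - 1 + (k - 3) = 2*k - 4 := by omega
    have e2 : k + (k - 3) = 2*k - 3 := by omega
    rw [e1, e2, hS1 _ (le_refl _), zero_add] at hr
    exact (mul_eq_zero.mp hr).resolve_left hη
  have hS3 : S (2*k - 2) = 0 := by
    have hr := hrel (k - 2) (by omega)
    have e1 : k - 1 + (k - 2) = 2*k - 3 := by omega
    have e2 : k + (k - 2) = 2*k - 2 := by omega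
    rw [e1, e2, hS2, zero_add] at hr
    exact (mul_eq_zero.mp hr).resolve_left hη
  have hSzero : ∀ m : ℕ, m ≤ 2*k - 2 → S m = 0 := by
    intro m hm
    rcases Nat.lt_or_ge m (2*k - 3) with hm' | hm'
    · exact hS1 m (by omega)
    · rcases Nat.eq_or_lt_of_le hm' with hm2 | hm2
      · rw [← hm2]; exact hS2
      · have : m = 2*k - 2 := by omega
        rw [this]; exact hS3
  -- a general vanishing statement for polynomials of degree ≤ 2k-2
  have hpoly : ∀ p : Polynomial F, p.natDegree ≤ 2*k - 2 → ∑ i, v i ^ 2 * p.eval (α i) = 0 := by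
    intro p hp
    have hdeg : p.natDegree < 2*k - 1 := by omega
    calc ∑ i, v i ^ 2 * p.eval (α i)
        = ∑ i, ∑ m ∈ Finset.range (2*k - 1), p.coeff m * (v i ^ 2 * α i ^ m) := by
          apply Finset.sum_congr rfl
          intro i _
          rw [eval_eq_sum_range' hdeg, Finset.mul_sum]
          apply Finset.sum_congr rfl
          intro m _
          ring
      _ = ∑ m ∈ Finset.range (2*k - 1), p.coeff m * S m := by
          rw [Finset.sum_comm]
          apply Finset.sum_congr rfl
          intro m _
          rw [hSdef, Finset.mul_sum]
      _ = 0 := by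
          apply Finset.sum_eq_zero
          intro m hm
          rw [hSzero m (by simp at hm; omega), mul_zero]
  -- main argument
  rcases eq_or_lt_of_le hlk with hlk' | hlk'
  · subst hlk'; exact h
  · intro c1 hc1 c2 hc2
    obtain ⟨f, hf, -, rfl⟩ := hc1
    obtain ⟨g, hg, -, rfl⟩ := hc2
    have hfg : (f * g).natDegree ≤ 2*k - 2 := by
      apply le_trans (natDegree_mul_le)
      omega
    have := hpoly (f * g) hfg
    rw [← this]
    apply Finset.sum_congr rfl
    intro i _
    rw [eval_mul]
    ring
end

section
/- Let q be a prime power, let 3 ≤ k ≤ q/2, let α = (α_1,…,α_{2k}) ∈ F_q^{2k} have pairwise distinct entries, let v = (v_1,…,v_{2k}) with all v_j ∈ F_q^*, let η ∈ F_q^*, and set u_j = −∏_{1≤i≤2k, i≠j} (α_j − α_i)^{−1} for j = 1,…,2k. Then the (+)-TGRS code C_{k,2k}(α,v,η) is self-dual if and only if η·S_α + 2 = 0 and there exists λ ∈ F_q^* such that λ·u_j = v_j² for all j = 1,…,2k. -/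
open Polynomial

open Polynomial Finset

namespace Stmt11Aux

variable {F : Type*} [Field F]

lemma basis_coeff {n : ℕ} (α : Fin n → F) (j : Fin n) :
    (Lagrange.basis Finset.univ α j).coeff (n - 1)
      = ∏ i ∈ Finset.univ.erase j, (α j - α i)⁻¹ := by
  have heq : Lagrange.basis Finset.univ α j
      = C (∏ i ∈ Finset.univ.erase j, (α j - α i)⁻¹)
        * ∏ i ∈ Finset.univ.erase j, (X - C (α i)) := by
    unfold Lagrange.basis Lagrange.basisDivisor
    rw [Finset.prod_mul_distrib, ← map_prod]
  have hmonic : (∏ i ∈ Finset.univ.erase j, (X - C (α i))).Monic :=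
    monic_prod_of_monic _ _ fun i _ => monic_X_sub_C (α i)
  have hdeg : (∏ i ∈ Finset.univ.erase j, (X - C (α i))).natDegree = n - 1 := by
    rw [natDegree_prod_of_monic _ _ fun i _ => monic_X_sub_C (α i)]
    simp [Finset.card_erase_of_mem]
  rw [heq, coeff_C_mul, ← hdeg, hmonic.coeff_natDegree, mul_one]

lemma sum_prod_inv_mul_eval {n : ℕ} (hn : 0 < n) (α : Fin n → F) (hα : Function.Injective α)
    (f : F[X]) (hf : f.natDegree ≤ n - 1) :
    ∑ j, (∏ i ∈ Finset.univ.erase j, (α j - α i)⁻¹) * f.eval (α j) = f.coeff (n - 1) := by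
  have hdeg : f.degree < ((Finset.univ : Finset (Fin n)).card : WithBot ℕ) := by
    rw [Finset.card_univ, Fintype.card_fin]
    calc f.degree ≤ (f.natDegree : WithBot ℕ) := degree_le_natDegree
    _ < (n : WithBot ℕ) := by exact_mod_cast (by omega : f.natDegree < n)
  have h := Lagrange.eq_interpolate (s := Finset.univ) hα.injOn hdeg
  conv_rhs => rw [h]
  rw [Lagrange.interpolate_apply, finset_sum_coeff]
  refine Finset.sum_congr rfl fun j _ => ?_
  rw [coeff_C_mul, basis_coeff α j, mul_comm]

lemma key_sum {n : ℕ} (hn : 0 < n) (α : Fin n → F) (hα : Function.Injective α)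
    (f : F[X]) (hf : f.natDegree ≤ n) :
    ∑ j, (∏ i ∈ Finset.univ.erase j, (α j - α i)⁻¹) * f.eval (α j)
      = f.coeff (n - 1) + (∑ i, α i) * f.coeff n := by
  set P : F[X] := ∏ i, (X - C (α i)) with hP
  have hPmonic : P.Monic := monic_prod_of_monic _ _ fun i _ => monic_X_sub_C (α i)
  have hPdeg : P.natDegree = n := by
    rw [hP, natDegree_prod_of_monic _ _ fun i _ => monic_X_sub_C (α i)]
    simp
  have hPcoeff : P.coeff (n - 1) = -∑ i, α i := by
    have h1 := prod_X_sub_C_nextCoeff (s := (Finset.univ : Finset (Fin n))) α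
    rw [nextCoeff_of_natDegree_pos (by omega : 0 < P.natDegree), hPdeg] at h1
    exact h1
  set g : F[X] := f - C (f.coeff n) * P with hg
  have hgdeg : g.natDegree ≤ n - 1 := by
    refine natDegree_le_iff_coeff_eq_zero.mpr fun m hm => ?_
    have hm' : n ≤ m := by omega
    simp only [hg, coeff_sub, coeff_C_mul]
    rcases eq_or_lt_of_le hm' with h | h
    · rw [← h, ← hPdeg, hPmonic.coeff_natDegree, mul_one, sub_self]
    · rw [coeff_eq_zero_of_natDegree_lt (by omega : f.natDegree < m),
        coeff_eq_zero_of_natDegree_lt (by omega : P.natDegree < m), mul_zero, sub_zero]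
  have heval : ∀ j, g.eval (α j) = f.eval (α j) := by
    intro j
    have h0 : P.eval (α j) = 0 := by
      rw [hP, eval_prod]
      exact Finset.prod_eq_zero (Finset.mem_univ j) (by simp)
    simp [hg, h0]
  have hgc : g.coeff (n - 1) = f.coeff (n - 1) + (∑ i, α i) * f.coeff n := by
    simp only [hg, coeff_sub, coeff_C_mul, hPcoeff]
    ring
  rw [← hgc, ← sum_prod_inv_mul_eval hn α hα g hgdeg]
  exact Finset.sum_congr rfl fun j _ => by rw [heval]

lemma coeff_mul_top {k : ℕ} (f g : F[X]) (hf : f.natDegree ≤ k) (hg : g.natDegree ≤ k) :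
    (f * g).coeff (2 * k) = f.coeff k * g.coeff k := by
  rw [coeff_mul]
  apply Finset.sum_eq_single ((k, k) : ℕ × ℕ)
  · rintro ⟨i, j⟩ hij hne
    rw [Finset.HasAntidiagonal.mem_antidiagonal] at hij
    have h2 : ¬(i = k ∧ j = k) := by
      rintro ⟨rfl, rfl⟩; exact hne rfl
    rcases lt_or_ge k i with h | h
    · rw [coeff_eq_zero_of_natDegree_lt (lt_of_le_of_lt hf h), zero_mul]
    · have hj : k < j := by omega
      rw [coeff_eq_zero_of_natDegree_lt (lt_of_le_of_lt hg hj), mul_zero]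
  · intro h
    exact absurd (Finset.HasAntidiagonal.mem_antidiagonal.mpr (by omega)) h

lemma coeff_mul_next {k : ℕ} (hk : 1 ≤ k) (f g : F[X]) (hf : f.natDegree ≤ k)
    (hg : g.natDegree ≤ k) :
    (f * g).coeff (2 * k - 1)
      = f.coeff (k - 1) * g.coeff k + f.coeff k * g.coeff (k - 1) := by
  rw [coeff_mul]
  have hne : ((k - 1 : ℕ), k) ≠ ((k : ℕ), k - 1) := by
    intro h
    rw [Prod.mk.injEq] at h
    omega
  have hsub : ({((k - 1 : ℕ), k), ((k : ℕ), k - 1)} : Finset (ℕ × ℕ))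
      ⊆ Finset.HasAntidiagonal.antidiagonal (2 * k - 1) := by
    intro p hp
    simp only [Finset.mem_insert, Finset.mem_singleton] at hp
    rcases hp with rfl | rfl <;> rw [Finset.HasAntidiagonal.mem_antidiagonal] <;> omega
  rw [← Finset.sum_subset hsub ?_]
  · rw [Finset.sum_pair hne]
  · rintro ⟨i, j⟩ hij hnot
    rw [Finset.HasAntidiagonal.mem_antidiagonal] at hij
    simp only [Finset.mem_insert, Finset.mem_singleton, Prod.mk.injEq, not_or] at hnot
    obtain ⟨h1, h2⟩ := hnot
    rcases lt_or_ge k i with h | h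
    · rw [coeff_eq_zero_of_natDegree_lt (lt_of_le_of_lt hf h), zero_mul]
    · have hj : k < j := by omega
      rw [coeff_eq_zero_of_natDegree_lt (lt_of_le_of_lt hg hj), mul_zero]

end Stmt11Aux

/-- self-duality criterion for (+)-TGRS codes of length `2k`. -/
theorem stmt11 {F : Type*} [Field F] [Fintype F] [DecidableEq F] {k : ℕ}
    (hk : 3 ≤ k) (hk2 : 2 * k ≤ Fintype.card F)
    (α : Fin (2 * k) → F) (hα : Function.Injective α)
    (v : Fin (2 * k) → F) (hv : ∀ j, v j ≠ 0)
    (η : F) (hη : η ≠ 0)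
    (u : Fin (2 * k) → F)
    (hu : ∀ j, u j = -∏ i ∈ Finset.univ.erase j, (α j - α i)⁻¹) :
    TGRS k (2 * k) α v η = dualCode (TGRS k (2 * k) α v η) ↔
      (η * (∑ i, α i) + 2 = 0 ∧
        ∃ lam : F, lam ≠ 0 ∧ ∀ j, lam * u j = v j ^ 2) := by
  classical
  have hk0 : 0 < 2 * k := by omega
  set S := ∑ i, α i with hS
  have husum : ∀ f : F[X], f.natDegree ≤ 2 * k →
      ∑ j, u j * f.eval (α j) = -(f.coeff (2 * k - 1) + S * f.coeff (2 * k)) := by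
    intro f hf
    have h := Stmt11Aux.key_sum hk0 α hα f hf
    calc ∑ j, u j * f.eval (α j)
        = -∑ j, (∏ i ∈ Finset.univ.erase j, (α j - α i)⁻¹) * f.eval (α j) := by
          rw [← Finset.sum_neg_distrib]
          exact Finset.sum_congr rfl fun j _ => by rw [hu j]; ring
      _ = _ := by rw [h, hS]
  constructor
  · -- forward direction
    intro hC
    have hpair : ∀ f : F[X], f.natDegree ≤ k → f.coeff k = η * f.coeff (k - 1) →
        ∀ g : F[X], g.natDegree ≤ k → g.coeff k = η * g.coeff (k - 1) →
        ∑ j, v j ^ 2 * (f.eval (α j) * g.eval (α j)) = 0 := by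
      intro f hf1 hf2 g hg1 hg2
      have hfC : (fun j => v j * f.eval (α j)) ∈ TGRS k (2 * k) α v η := ⟨f, hf1, hf2, rfl⟩
      have hgC : (fun j => v j * g.eval (α j)) ∈ TGRS k (2 * k) α v η := ⟨g, hg1, hg2, rfl⟩
      rw [hC] at hfC
      simp only [dualCode, Set.mem_setOf_eq] at hfC
      have h := hfC _ hgC
      refine Eq.trans ?_ h
      exact Finset.sum_congr rfl fun j _ => by ring
    have hXa : ∀ a : ℕ, a ≤ k - 2 → ((X : F[X]) ^ a).natDegree ≤ k ∧
        ((X : F[X]) ^ a).coeff k = η * ((X : F[X]) ^ a).coeff (k - 1) := by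
      intro a ha
      constructor
      · rw [natDegree_X_pow]; omega
      · rw [coeff_X_pow, coeff_X_pow, if_neg (by omega), if_neg (by omega), mul_zero]
    set G : F[X] := X ^ (k - 1) + C η * X ^ k with hGdef
    have hG1 : G.natDegree ≤ k := by
      refine le_trans (natDegree_add_le _ _) (max_le ?_ ?_)
      · rw [natDegree_X_pow]; omega
      · exact le_trans (natDegree_C_mul_le _ _) (le_of_eq (natDegree_X_pow _))
    have hGco : ∀ m, G.coeff m = (if m = k - 1 then 1 else 0) + (if m = k then η else 0) := by
      intro m
      rw [hGdef, coeff_add, coeff_X_pow, coeff_C_mul, coeff_X_pow, mul_ite, mul_one, mul_zero]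
    have hGk : G.coeff k = η * G.coeff (k - 1) := by
      rw [hGco, hGco, if_neg (by omega : ¬ k = k - 1), if_pos rfl, if_pos rfl,
        if_neg (by omega : ¬ k - 1 = k)]
      ring
    have hGeval : ∀ x : F, G.eval x = x ^ (k - 1) + η * x ^ k := by
      intro x; simp [hGdef]
    have hMlow : ∀ m, m ≤ 2 * k - 4 → ∑ j, v j ^ 2 * α j ^ m = 0 := by
      intro m hm
      obtain ⟨a, b, ha, hb, hab⟩ : ∃ a b, a ≤ k - 2 ∧ b ≤ k - 2 ∧ a + b = m :=
        ⟨min m (k - 2), m - min m (k - 2), by omega, by omega, by omega⟩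
      have h := hpair (X ^ a) (hXa a ha).1 (hXa a ha).2 (X ^ b) (hXa b hb).1 (hXa b hb).2
      refine Eq.trans ?_ h
      refine Finset.sum_congr rfl fun j _ => ?_
      rw [eval_pow, eval_pow, eval_X, ← pow_add, hab]
    have hM3 : ∑ j, v j ^ 2 * α j ^ (2 * k - 3) = 0 := by
      have h := hpair (X ^ (k - 3)) (hXa _ (by omega)).1 (hXa _ (by omega)).2 G hG1 hGk
      have e : (∑ j, v j ^ 2 * α j ^ (2 * k - 4)) + η * ∑ j, v j ^ 2 * α j ^ (2 * k - 3) = 0 := by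
        rw [Finset.mul_sum, ← Finset.sum_add_distrib]
        refine Eq.trans ?_ h
        refine Finset.sum_congr rfl fun j _ => ?_
        rw [eval_pow, eval_X, hGeval]
        have e1 : 2 * k - 4 = (k - 3) + (k - 1) := by omega
        have e2 : 2 * k - 3 = (k - 3) + k := by omega
        rw [e1, e2, pow_add, pow_add]
        ring
      rw [hMlow _ (le_refl _), zero_add] at e
      exact (mul_eq_zero.mp e).resolve_left hη
    have hM2 : ∑ j, v j ^ 2 * α j ^ (2 * k - 2) = 0 := by
      have h := hpair (X ^ (k - 2)) (hXa _ (by omega)).1 (hXa _ (by omega)).2 G hG1 hGk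
      have e : (∑ j, v j ^ 2 * α j ^ (2 * k - 3)) + η * ∑ j, v j ^ 2 * α j ^ (2 * k - 2) = 0 := by
        rw [Finset.mul_sum, ← Finset.sum_add_distrib]
        refine Eq.trans ?_ h
        refine Finset.sum_congr rfl fun j _ => ?_
        rw [eval_pow, eval_X, hGeval]
        have e1 : 2 * k - 3 = (k - 2) + (k - 1) := by omega
        have e2 : 2 * k - 2 = (k - 2) + k := by omega
        rw [e1, e2, pow_add, pow_add]
        ring
      rw [hM3, zero_add] at e
      exact (mul_eq_zero.mp e).resolve_left hη
    have hM : ∀ m, m ≤ 2 * k - 2 → ∑ j, v j ^ 2 * α j ^ m = 0 := by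
      intro m hm
      rcases (by omega : m ≤ 2 * k - 4 ∨ m = 2 * k - 3 ∨ m = 2 * k - 2) with h | h | h
      · exact hMlow m h
      · rw [h]; exact hM3
      · rw [h]; exact hM2
    set T : F := ∑ j, v j ^ 2 * α j ^ (2 * k - 1) with hT
    have hwj : ∀ j, v j ^ 2 = -T * u j := by
      intro j
      set P : F[X] := ∏ i ∈ Finset.univ.erase j, (X - C (α i)) with hPdef
      have hPm : P.Monic := monic_prod_of_monic _ _ fun i _ => monic_X_sub_C (α i)
      have hPd : P.natDegree = 2 * k - 1 := by
        rw [hPdef, natDegree_prod_of_monic _ _ fun i _ => monic_X_sub_C (α i)]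
        simp [Finset.card_erase_of_mem]
      have h1 : ∑ i, v i ^ 2 * P.eval (α i) = v j ^ 2 * P.eval (α j) := by
        apply Finset.sum_eq_single_of_mem j (Finset.mem_univ j)
        intro i _ hne
        have h0 : P.eval (α i) = 0 := by
          rw [hPdef, eval_prod]
          exact Finset.prod_eq_zero (Finset.mem_erase.mpr ⟨hne, Finset.mem_univ i⟩) (by simp)
        rw [h0, mul_zero]
      have hx : ∀ x : F, P.eval x = ∑ m ∈ Finset.range (2 * k), P.coeff m * x ^ m := by
        intro x
        have h2k : 2 * k - 1 + 1 = 2 * k := by omega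
        rw [eval_eq_sum_range, hPd, h2k]
      have h2 : ∑ i, v i ^ 2 * P.eval (α i) = T := by
        calc ∑ i, v i ^ 2 * P.eval (α i)
            = ∑ m ∈ Finset.range (2 * k), P.coeff m * ∑ i, v i ^ 2 * α i ^ m := by
              simp_rw [hx, Finset.mul_sum]
              rw [Finset.sum_comm]
              exact Finset.sum_congr rfl fun m _ => Finset.sum_congr rfl fun i _ => by ring
          _ = T := by
              rw [Finset.sum_eq_single (2 * k - 1)]
              · rw [← hPd, hPm.coeff_natDegree, one_mul, hT, hPd]
              · intro m hmr hne
                rw [hM m (by rw [Finset.mem_range] at hmr; omega), mul_zero]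
              · intro hmem; exact absurd (Finset.mem_range.mpr (by omega)) hmem
      have hPev : P.eval (α j) = ∏ i ∈ Finset.univ.erase j, (α j - α i) := by
        rw [hPdef, eval_prod]; simp
      have hPne : P.eval (α j) ≠ 0 := by
        rw [hPev]
        refine Finset.prod_ne_zero_iff.mpr fun i hi => ?_
        exact sub_ne_zero.mpr fun hh => (Finset.mem_erase.mp hi).1 ((hα hh).symm)
      have h3 : v j ^ 2 * P.eval (α j) = T := by rw [← h1, h2]
      have h4 : v j ^ 2 = T * (P.eval (α j))⁻¹ := by
        rw [← h3]; field_simp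
      have hinvprod : (P.eval (α j))⁻¹ = ∏ i ∈ Finset.univ.erase j, (α j - α i)⁻¹ := by
        rw [hPev, ← Finset.prod_inv_distrib]
      rw [hu j, h4, hinvprod]
      ring
    have hT0 : T ≠ 0 := by
      intro h0
      have h := hwj ⟨0, by omega⟩
      rw [h0, neg_zero, zero_mul, pow_eq_zero_iff (by omega : 2 ≠ 0)] at h
      exact hv _ h
    have hM2k : ∑ j, v j ^ 2 * α j ^ (2 * k) = T * S := by
      have hX2k := husum (X ^ (2 * k)) (le_of_eq (natDegree_X_pow _))
      rw [coeff_X_pow, coeff_X_pow, if_neg (by omega : ¬ 2 * k - 1 = 2 * k), if_pos rfl,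
        mul_one, zero_add] at hX2k
      calc ∑ j, v j ^ 2 * α j ^ (2 * k)
          = -T * ∑ j, u j * (X ^ (2 * k) : F[X]).eval (α j) := by
            rw [Finset.mul_sum]
            refine Finset.sum_congr rfl fun j _ => ?_
            rw [hwj j, eval_pow, eval_X]; ring
        _ = T * S := by rw [hX2k]; ring
    have hfin : (∑ j, v j ^ 2 * α j ^ (2 * k - 2)) + 2 * η * T
        + η ^ 2 * (∑ j, v j ^ 2 * α j ^ (2 * k)) = 0 := by
      have h := hpair G hG1 hGk G hG1 hGk
      rw [hT, Finset.mul_sum, Finset.mul_sum, ← Finset.sum_add_distrib, ← Finset.sum_add_distrib]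
      refine Eq.trans ?_ h
      refine Finset.sum_congr rfl fun j _ => ?_
      rw [hGeval]
      have e1 : 2 * k - 2 = (k - 1) + (k - 1) := by omega
      have e2 : 2 * k - 1 = (k - 1) + k := by omega
      have e3 : 2 * k = k + k := by omega
      rw [e1, e2, e3, pow_add, pow_add, pow_add]
      ring
    rw [hM _ le_rfl, hM2k, zero_add] at hfin
    refine ⟨?_, -T, neg_ne_zero.mpr hT0, fun j => (hwj j).symm⟩
    have h1 : T * (η * (η * S + 2)) = 0 := by linear_combination hfin
    have h2 := (mul_eq_zero.mp h1).resolve_left hT0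
    exact (mul_eq_zero.mp h2).resolve_left hη
  · -- backward direction
    rintro ⟨h2, lam, hlam, hw⟩
    have horth : ∀ f : F[X], f.natDegree ≤ k → f.coeff k = η * f.coeff (k - 1) →
        ∀ g : F[X], g.natDegree ≤ k → g.coeff k = η * g.coeff (k - 1) →
        ∑ j, (v j * f.eval (α j)) * (v j * g.eval (α j)) = 0 := by
      intro f hf1 hf2 g hg1 hg2
      have hdeg : (f * g).natDegree ≤ 2 * k :=
        le_trans natDegree_mul_le (le_trans (add_le_add hf1 hg1) (by omega))
      have hus := husum (f * g) hdeg
      rw [Stmt11Aux.coeff_mul_next (by omega) f g hf1 hg1,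
        Stmt11Aux.coeff_mul_top f g hf1 hg1, hf2, hg2] at hus
      calc ∑ j, (v j * f.eval (α j)) * (v j * g.eval (α j))
          = lam * ∑ j, u j * (f * g).eval (α j) := by
            rw [Finset.mul_sum]
            refine Finset.sum_congr rfl fun j _ => ?_
            have hvj := hw j
            rw [eval_mul]
            linear_combination (-(f.eval (α j) * g.eval (α j))) * hvj
        _ = 0 := by
            rw [hus]
            linear_combination (-(lam * f.coeff (k - 1) * g.coeff (k - 1) * η)) * h2
    set b : Fin k → F[X] :=
      fun i => X ^ (i : ℕ) + if (i : ℕ) = k - 1 then C η * X ^ k else 0 with hb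
    have hbco : ∀ (i : Fin k) (m : ℕ), (b i).coeff m
        = (if m = (i : ℕ) then 1 else 0) + (if (i : ℕ) = k - 1 ∧ m = k then η else 0) := by
      intro i m
      simp only [hb]
      by_cases h : (i : ℕ) = k - 1
      · rw [if_pos h, coeff_add, coeff_X_pow, coeff_C_mul, coeff_X_pow]
        congr 1
        by_cases hm : m = k
        · rw [if_pos hm, if_pos ⟨h, hm⟩, mul_one]
        · rw [if_neg hm, if_neg (show ¬((i : ℕ) = k - 1 ∧ m = k) from fun hc => hm hc.2), mul_zero]
      · rw [if_neg h, add_zero, coeff_X_pow,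
          if_neg (show ¬((i : ℕ) = k - 1 ∧ m = k) from fun hc => h hc.1), add_zero]
    have hkey : ∀ (a : Fin k → F) (m : ℕ), (∑ i, C (a i) * b i).coeff m
        = (if h : m < k then a ⟨m, h⟩ else 0)
          + (if m = k then η * a ⟨k - 1, by omega⟩ else 0) := by
      intro a m
      rw [finset_sum_coeff]
      simp_rw [coeff_C_mul, hbco, mul_add, Finset.sum_add_distrib]
      congr 1
      · by_cases h : m < k
        · rw [dif_pos h, Finset.sum_eq_single (⟨m, h⟩ : Fin k)]
          · simp
          · intro i _ hne
            rw [if_neg (fun hh : m = (i : ℕ) => hne (Fin.ext hh.symm)), mul_zero]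
          · intro h'; exact absurd (Finset.mem_univ _) h'
        · rw [dif_neg h]
          refine Finset.sum_eq_zero fun i _ => ?_
          have hi := i.isLt
          rw [if_neg (by omega), mul_zero]
      · rw [Finset.sum_eq_single (⟨k - 1, by omega⟩ : Fin k)]
        · by_cases hm : m = k
          · rw [if_pos ⟨rfl, hm⟩, if_pos hm]; ring
          · rw [if_neg (show ¬((k - 1 : ℕ) = k - 1 ∧ m = k) from fun hc => hm hc.2), if_neg hm, mul_zero]
        · intro i _ hne
          have hii : (i : ℕ) ≠ k - 1 := fun hh => hne (Fin.ext hh)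
          rw [if_neg (show ¬((i : ℕ) = k - 1 ∧ m = k) from fun hc => hii hc.1), mul_zero]
        · intro h'; exact absurd (Finset.mem_univ _) h'
    have hfa_deg : ∀ a : Fin k → F, (∑ i, C (a i) * b i).natDegree ≤ k := fun a =>
      natDegree_le_iff_coeff_eq_zero.mpr fun m hm => by
        rw [hkey a m, dif_neg (by omega), if_neg (by omega), add_zero]
    have hfa_tw : ∀ a : Fin k → F, (∑ i, C (a i) * b i).coeff k
        = η * (∑ i, C (a i) * b i).coeff (k - 1) := fun a => by
      rw [hkey, hkey, dif_neg (by omega), dif_pos (by omega : k - 1 < k), if_pos rfl,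
        if_neg (by omega : ¬ k - 1 = k), zero_add, add_zero]
    set φ : (Fin k → F) →ₗ[F] (Fin (2 * k) → F) :=
      (Matrix.of fun (j : Fin (2 * k)) (i : Fin k) => v j * (b i).eval (α j)).mulVecLin with hφ
    have hφeval : ∀ (a : Fin k → F) (j : Fin (2 * k)),
        φ a j = v j * (∑ i, C (a i) * b i).eval (α j) := by
      intro a j
      rw [hφ]
      simp only [Matrix.mulVecLin_apply, Matrix.mulVec, dotProduct, Matrix.of_apply]
      rw [eval_finset_sum, Finset.mul_sum]
      refine Finset.sum_congr rfl fun i _ => ?_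
      rw [eval_mul, eval_C]
      ring
    have hrange : TGRS k (2 * k) α v η = ↑(LinearMap.range φ) := by
      ext c
      simp only [SetLike.mem_coe, LinearMap.mem_range]
      constructor
      · rintro ⟨f, hf1, hf2, rfl⟩
        refine ⟨fun i => f.coeff (i : ℕ), ?_⟩
        have hfeq : (∑ i : Fin k, C (f.coeff (i : ℕ)) * b i) = f := by
          ext m
          rw [hkey]
          by_cases h : m < k
          · rw [dif_pos h, if_neg (by omega), add_zero]
          · rcases eq_or_lt_of_le (not_lt.mp h) with h' | h'
            · rw [dif_neg h, ← h', if_pos rfl, zero_add]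
              exact hf2.symm
            · rw [dif_neg h, if_neg (by omega), add_zero]
              exact (coeff_eq_zero_of_natDegree_lt (lt_of_le_of_lt hf1 h')).symm
        funext j
        rw [hφeval, hfeq]
      · rintro ⟨a, rfl⟩
        exact ⟨∑ i, C (a i) * b i, hfa_deg a, hfa_tw a, funext fun j => hφeval a j⟩
    have hφinj : Function.Injective φ := by
      refine LinearMap.ker_eq_bot.mp (LinearMap.ker_eq_bot'.mpr fun a ha => ?_)
      have hf0 : (∑ i, C (a i) * b i) = 0 := by
        apply Polynomial.eq_zero_of_natDegree_lt_card_of_eval_eq_zero _ hα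
        · intro j
          have hj := congrFun ha j
          rw [hφeval] at hj
          rcases mul_eq_zero.mp hj with h | h
          · exact absurd h (hv j)
          · exact h
        · rw [Fintype.card_fin]
          exact lt_of_le_of_lt (hfa_deg a) (by omega)
      funext i
      have hco := hkey a (i : ℕ)
      have hlt := i.isLt
      rw [hf0, coeff_zero, dif_pos hlt, if_neg (by omega), add_zero] at hco
      simpa using hco.symm
    have hrankW : Module.finrank F (LinearMap.range φ) = k := by
      rw [LinearMap.finrank_range_of_inj hφinj]
      simp [Module.finrank_pi]
    set B : LinearMap.BilinForm F (Fin (2 * k) → F) :=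
      LinearMap.mk₂ F (fun x y => ∑ i, x i * y i)
        (fun x x' y => by simp [add_mul, Finset.sum_add_distrib])
        (fun c x y => by simp [Finset.mul_sum, mul_assoc])
        (fun x y y' => by simp [mul_add, Finset.sum_add_distrib])
        (fun c x y => by simp [Finset.mul_sum, mul_left_comm]) with hB
    have hBapp : ∀ x y : Fin (2 * k) → F, B x y = ∑ i, x i * y i := fun x y => by
      rw [hB, LinearMap.mk₂_apply]
    have hBrefl : B.IsRefl := by
      intro x y h
      rw [hBapp] at h ⊢
      refine Eq.trans ?_ h
      exact Finset.sum_congr rfl fun i _ => mul_comm _ _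
    have hBnd : B.Nondegenerate := by
      refine LinearMap.BilinForm.Nondegenerate.ofSeparatingLeft ?_
      intro x hx
      funext i
      have hxi := hx (Pi.single i 1)
      rw [hBapp] at hxi
      simpa [Pi.single_apply, mul_ite] using hxi
    have hle : LinearMap.range φ ≤ B.orthogonal (LinearMap.range φ) := by
      intro c hc
      rw [LinearMap.BilinForm.mem_orthogonal_iff]
      intro n hn
      obtain ⟨a, rfl⟩ := hn
      obtain ⟨a', rfl⟩ := hc
      show B (φ a) (φ a') = 0
      rw [hBapp]
      have h := horth (∑ i, C (a i) * b i) (hfa_deg a) (hfa_tw a)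
        (∑ i, C (a' i) * b i) (hfa_deg a') (hfa_tw a')
      refine Eq.trans ?_ h
      refine Finset.sum_congr rfl fun j _ => ?_
      rw [hφeval, hφeval]
    have horthrank : Module.finrank F (B.orthogonal (LinearMap.range φ)) = k := by
      rw [LinearMap.BilinForm.finrank_orthogonal hBnd, hrankW]
      simp [Module.finrank_pi]
      omega
    have hWeq : LinearMap.range φ = B.orthogonal (LinearMap.range φ) :=
      Submodule.eq_of_le_of_finrank_le hle (by rw [horthrank, hrankW])
    have hdual : dualCode (↑(LinearMap.range φ) : Set (Fin (2 * k) → F))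
        = ↑(B.orthogonal (LinearMap.range φ)) := by
      ext x
      simp only [dualCode, Set.mem_setOf_eq, SetLike.mem_coe,
        LinearMap.BilinForm.mem_orthogonal_iff]
      constructor
      · intro h n hn
        show B n x = 0
        rw [hBapp]
        calc ∑ i, n i * x i = ∑ i, x i * n i :=
              Finset.sum_congr rfl fun i _ => mul_comm _ _
          _ = 0 := h n hn
      · intro h c hc
        have hcx : B c x = 0 := h c hc
        rw [hBapp] at hcx
        calc ∑ i, x i * c i = ∑ i, c i * x i :=
              Finset.sum_congr rfl fun i _ => mul_comm _ _
          _ = 0 := hcx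
    rw [hrange, hdual, ← hWeq]
end

section
/- Let q be a prime power, let 3 ≤ l ≤ k ≤ q/2 with k < n ≤ q, let α = (α_1,…,α_n) ∈ F_q^n have pairwise distinct nonzero entries (so 0 ∉ A_α), let v = (v_1,…,v_n) with all v_i ∈ F_q^*, and let η ∈ F_q^*. If the (+)-ETGRS code C_{k,n}(α,v,η,∞) is self-orthogonal, then the (+)-ETGRS code C_{l,n}(α, v', η, ∞) with v' = (α_1^{k−l}·v_1, …, α_n^{k−l}·v_n) is self-orthogonal. -/
open Polynomial

/-- self-orthogonality of (+)-ETGRS codes descends to smaller dimension,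
after rescaling by powers of the evaluation points. -/
theorem stmt13 {F : Type*} [Field F] [Fintype F] [DecidableEq F] {l k n : ℕ}
    (hl : 3 ≤ l) (hlk : l ≤ k) (hk2 : 2 * k ≤ Fintype.card F)
    (hkn : k < n) (hn : n ≤ Fintype.card F)
    (α : Fin n → F) (hα : Function.Injective α) (hα0 : ∀ i, α i ≠ 0)
    (v : Fin n → F) (hv : ∀ i, v i ≠ 0)
    (η : F) (hη : η ≠ 0)
    (h : selfOrthogonal (ETGRS k n α v η)) :
    selfOrthogonal (ETGRS l n α (fun j => α j ^ (k - l) * v j) η) := by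
  have hsub : ETGRS l n α (fun j => α j ^ (k - l) * v j) η ⊆ ETGRS k n α v η := by
    rintro c ⟨f, hdf, hcf, rfl⟩
    obtain ⟨m, hm⟩ : ∃ m, k - l = m := ⟨k - l, rfl⟩
    rw [hm]
    have h1 : (X ^ m * f).coeff k = f.coeff l := by
      have hk : k = l + m := by omega
      rw [hk, Polynomial.coeff_X_pow_mul]
    have h2 : (X ^ m * f).coeff (k - 1) = f.coeff (l - 1) := by
      have hk : k - 1 = (l - 1) + m := by omega
      rw [hk, Polynomial.coeff_X_pow_mul]
    refine ⟨X ^ m * f, ?_, ?_, ?_⟩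
    · calc (X ^ m * f).natDegree
          ≤ (X ^ m : F[X]).natDegree + f.natDegree := Polynomial.natDegree_mul_le
        _ ≤ m + l := by
            gcongr
            exact Polynomial.natDegree_X_pow_le _
        _ ≤ k := by omega
    · rw [h1, h2, hcf]
    · rw [h2]
      have heq : (fun j => α j ^ m * v j * f.eval (α j))
          = (fun j => v j * (X ^ m * f).eval (α j)) := by
        funext j
        simp only [Polynomial.eval_mul, Polynomial.eval_pow, Polynomial.eval_X]
        ring
      rw [heq]
  intro x hx c hc
  exact h (hsub hx) c (hsub hc)
end

section
/- Let q be a prime power, let 3 ≤ k < n ≤ q, let α = (α_1,…,α_n) ∈ F_q^n have pairwise distinct entries, let v = (v_1,…,v_n) with all v_i ∈ F_q^*, and let η ∈ F_q^*. Then the (+)-ETGRS code C_{k,n}(α,v,η,∞) is not self-dual. -/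
open Polynomial

namespace Stmt14Aux

open Polynomial Matrix

lemma vandermonde_kill {F : Type*} [Field F] {n : ℕ} (α : Fin n → F)
    (hα : Function.Injective α) (w : Fin n → F)
    (h : ∀ m : Fin n, ∑ i, w i * α i ^ (m : ℕ) = 0) : w = 0 := by
  have hdet : (Matrix.vandermonde α).det ≠ 0 :=
    Matrix.det_vandermonde_ne_zero_iff.2 hα
  have hdet' : ((Matrix.vandermonde α)ᵀ).det ≠ 0 := by rwa [Matrix.det_transpose]
  apply Matrix.eq_zero_of_mulVec_eq_zero hdet'
  funext m
  simpa [Matrix.mulVec, dotProduct, Matrix.vandermonde, mul_comm] using h m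

/-- the standard bilinear form -/
noncomputable def dotForm (F : Type*) [Field F] (N : ℕ) :
    LinearMap.BilinForm F (Fin N → F) :=
  LinearMap.mk₂ F (fun x y => ∑ i, x i * y i)
    (by intros; simp [add_mul, Finset.sum_add_distrib])
    (by intros; simp [Finset.mul_sum, mul_assoc])
    (by intros; simp [mul_add, Finset.sum_add_distrib])
    (by intros; simp [Finset.mul_sum]; ring_nf; simp [mul_assoc, mul_comm, mul_left_comm])

@[simp] lemma dotForm_apply {F : Type*} [Field F] {N : ℕ} (x y : Fin N → F) :
    dotForm F N x y = ∑ i, x i * y i := rfl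

lemma dotForm_refl {F : Type*} [Field F] {N : ℕ} : (dotForm F N).IsRefl := by
  intro x y hxy
  simpa [mul_comm] using hxy

lemma dotForm_nondeg {F : Type*} [Field F] {N : ℕ} : (dotForm F N).Nondegenerate := by
  refine (LinearMap.IsRefl.nondegenerate_iff_separatingLeft (B := dotForm F N)
    (fun x y hxy => by simpa [mul_comm] using hxy)).2 ?_
  intro x hx
  funext j
  simpa [Pi.single_apply, mul_ite, Finset.sum_ite_eq'] using hx (Pi.single j 1)

lemma dualCode_eq_orthogonal {F : Type*} [Field F] {N : ℕ} (W : Submodule F (Fin N → F)) :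
    dualCode (↑W : Set (Fin N → F)) = ↑((dotForm F N).orthogonal W) := by
  ext x
  constructor
  · intro hx
    intro y hy
    have := hx y hy
    simpa [LinearMap.BilinForm.IsOrtho, mul_comm] using this
  · intro hx c hc
    have := hx c hc
    simpa [LinearMap.BilinForm.IsOrtho, mul_comm] using this

/-- The linear parametrization of the (+)-ETGRS code by coefficient vectors. -/
noncomputable def Phi {F : Type*} [Field F] (k n : ℕ) (α v : Fin n → F) (η : F)
    (hk : 0 < k) : (Fin k → F) →ₗ[F] (Fin (n + 1) → F) where
  toFun a := Fin.snoc
    (fun j => v j * ((∑ i : Fin k, a i * α j ^ (i : ℕ)) + η * a ⟨k - 1, by omega⟩ * α j ^ k))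
    (a ⟨k - 1, by omega⟩)
  map_add' a b := by
    funext x
    refine Fin.lastCases ?_ (fun x => ?_) x
    · simp
    · have hs : ∑ i : Fin k, (a i + b i) * α x ^ (i : ℕ)
          = (∑ i : Fin k, a i * α x ^ (i : ℕ)) + ∑ i : Fin k, b i * α x ^ (i : ℕ) := by
        rw [← Finset.sum_add_distrib]
        exact Finset.sum_congr rfl fun i _ => by ring
      simp only [Pi.add_apply, Fin.snoc_castSucc, hs]
      ring
  map_smul' c a := by
    funext x
    refine Fin.lastCases ?_ (fun x => ?_) x
    · simp
    · have hs : ∑ i : Fin k, (c * a i) * α x ^ (i : ℕ)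
          = c * ∑ i : Fin k, a i * α x ^ (i : ℕ) := by
        rw [Finset.mul_sum]
        exact Finset.sum_congr rfl fun i _ => by ring
      simp only [Pi.smul_apply, smul_eq_mul, RingHom.id_apply, Fin.snoc_castSucc, hs]
      ring

lemma ETGRS_eq_range {F : Type*} [Field F] (k n : ℕ) (α v : Fin n → F) (η : F) (hk : 0 < k) :
    ETGRS k n α v η = ↑(LinearMap.range (Phi k n α v η hk)) := by
  ext c
  constructor
  · rintro ⟨f, hf1, hf2, rfl⟩
    refine ⟨fun i => f.coeff i, ?_⟩
    simp only [Phi, LinearMap.coe_mk, AddHom.coe_mk]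
    funext x
    refine Fin.lastCases ?_ (fun j => ?_) x
    · simp
    · simp only [Fin.snoc_castSucc]
      congr 1
      have he : f.eval (α j) = ∑ i ∈ Finset.range (k + 1), f.coeff i * α j ^ i :=
        eval_eq_sum_range' (by omega) _
      rw [he, Finset.sum_range_succ, hf2,
        Fin.sum_univ_eq_sum_range (fun i => f.coeff i * α j ^ i) k]
  · rintro ⟨a, rfl⟩
    have hck : ((∑ i : Fin k, C (a i) * X ^ (i : ℕ)) + C (η * a ⟨k - 1, by omega⟩) * X ^ k).coeff k
        = η * a ⟨k - 1, by omega⟩ := by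
      simp only [coeff_add, finset_sum_coeff, coeff_C_mul, coeff_X_pow, mul_ite, mul_one, mul_zero]
      rw [Finset.sum_eq_zero fun i _ => by have h2 := i.2; rw [if_neg (by omega)]]
      simp
    have hck1 : ((∑ i : Fin k, C (a i) * X ^ (i : ℕ)) + C (η * a ⟨k - 1, by omega⟩) * X ^ k).coeff (k - 1)
        = a ⟨k - 1, by omega⟩ := by
      simp only [coeff_add, finset_sum_coeff, coeff_C_mul, coeff_X_pow, mul_ite, mul_one, mul_zero]
      rw [Finset.sum_eq_single (⟨k - 1, by omega⟩ : Fin k)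
          (fun i _ hi => by
            have h2 : (i : ℕ) ≠ k - 1 := fun hc => hi (Fin.ext hc)
            rw [if_neg (by omega)])
          (by simp), if_pos rfl, if_neg (by omega), add_zero]
    refine ⟨(∑ i : Fin k, C (a i) * X ^ (i : ℕ)) + C (η * a ⟨k - 1, by omega⟩) * X ^ k,
      ?_, ?_, ?_⟩
    · refine (natDegree_add_le _ _).trans (max_le ?_ ?_)
      · exact natDegree_sum_le_of_forall_le _ _ fun i _ =>
          (natDegree_C_mul_X_pow_le _ _).trans (by omega)
      · exact natDegree_C_mul_X_pow_le _ _
    · rw [hck, hck1]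
    · rw [hck1]
      simp only [Phi, LinearMap.coe_mk, AddHom.coe_mk]
      funext x
      refine Fin.lastCases ?_ (fun j => ?_) x
      · simp
      · simp only [Fin.snoc_castSucc]
        congr 1
        simp [eval_finset_sum]

end Stmt14Aux

/-- no (+)-ETGRS code is self-dual. -/
theorem stmt14 {F : Type*} [Field F] [Fintype F] [DecidableEq F] {k n : ℕ}
    (hk : 3 ≤ k) (hkn : k < n) (hn : n ≤ Fintype.card F)
    (α : Fin n → F) (hα : Function.Injective α)
    (v : Fin n → F) (hv : ∀ i, v i ≠ 0)
    (η : F) (hη : η ≠ 0) :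
    ETGRS k n α v η ≠ dualCode (ETGRS k n α v η) := by
  classical
  open Stmt14Aux Polynomial in
  intro h
  have hk0 : 0 < k := by omega
  -- self-orthogonality pairing
  have key : ∀ f g : F[X], f.natDegree ≤ k → f.coeff k = η * f.coeff (k - 1) →
      g.natDegree ≤ k → g.coeff k = η * g.coeff (k - 1) →
      (∑ j, (v j * f.eval (α j)) * (v j * g.eval (α j)))
        + f.coeff (k - 1) * g.coeff (k - 1) = 0 := by
    intro f g hf1 hf2 hg1 hg2
    have hfm : (Fin.snoc (fun j => v j * f.eval (α j)) (f.coeff (k - 1)) : Fin (n + 1) → F)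
        ∈ ETGRS k n α v η := ⟨f, hf1, hf2, rfl⟩
    have hgm : (Fin.snoc (fun j => v j * g.eval (α j)) (g.coeff (k - 1)) : Fin (n + 1) → F)
        ∈ ETGRS k n α v η := ⟨g, hg1, hg2, rfl⟩
    rw [h] at hfm
    simp only [dualCode, Set.mem_setOf_eq] at hfm
    have h0 := hfm _ hgm
    simpa [Fin.sum_univ_castSucc] using h0
  -- power sums
  have claim1 : ∀ m : ℕ, m ≤ 2 * k - 4 → ∑ j, v j ^ 2 * α j ^ m = 0 := by
    intro m hm
    set a := min m (k - 2) with ha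
    set b := m - a with hb
    have hab : a + b = m := by omega
    have hXc : ∀ d : ℕ, d ≤ k - 2 →
        ((X : F[X]) ^ d).coeff k = η * ((X : F[X]) ^ d).coeff (k - 1) := by
      intro d hd
      rw [coeff_X_pow, coeff_X_pow, if_neg (by omega), if_neg (by omega), mul_zero]
    have h0 := key (X ^ a) (X ^ b)
      (by rw [natDegree_X_pow]; omega) (hXc a (by omega))
      (by rw [natDegree_X_pow]; omega) (hXc b (by omega))
    rw [coeff_X_pow, if_neg (by omega), zero_mul, add_zero] at h0
    rw [← h0]
    refine Finset.sum_congr rfl fun j _ => ?_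
    rw [← hab, pow_add]
    simp
    ring
  have claim2 : ∀ jj : ℕ, jj ≤ k - 2 →
      (∑ j, v j ^ 2 * α j ^ (k - 1 + jj)) + η * ∑ j, v j ^ 2 * α j ^ (k + jj) = 0 := by
    intro jj hjj
    have hdeg : ((X : F[X]) ^ (k - 1) + C η * X ^ k).natDegree ≤ k :=
      (natDegree_add_le _ _).trans (max_le (by rw [natDegree_X_pow]; omega)
        (natDegree_C_mul_X_pow_le _ _))
    have hcok : ((X : F[X]) ^ (k - 1) + C η * X ^ k).coeff k = η := by
      rw [coeff_add, coeff_X_pow, coeff_C_mul, coeff_X_pow, if_neg (by omega), if_pos rfl,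
        mul_one, zero_add]
    have hcok1 : ((X : F[X]) ^ (k - 1) + C η * X ^ k).coeff (k - 1) = 1 := by
      rw [coeff_add, coeff_X_pow, coeff_C_mul, coeff_X_pow, if_pos rfl, if_neg (by omega),
        mul_zero, add_zero]
    have h0 := key ((X : F[X]) ^ (k - 1) + C η * X ^ k) (X ^ jj)
      hdeg (by rw [hcok, hcok1, mul_one])
      (by rw [natDegree_X_pow]; omega)
      (by rw [coeff_X_pow, coeff_X_pow, if_neg (by omega), if_neg (by omega), mul_zero])
    rw [coeff_X_pow, if_neg (by omega), mul_zero, add_zero] at h0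
    rw [← h0, Finset.mul_sum, ← Finset.sum_add_distrib]
    refine Finset.sum_congr rfl fun j _ => ?_
    rw [pow_add, pow_add]
    simp
    ring
  have h23 : ∑ j, v j ^ 2 * α j ^ (2 * k - 3) = 0 := by
    have h0 := claim2 (k - 3) (by omega)
    rw [(by omega : k - 1 + (k - 3) = 2 * k - 4), (by omega : k + (k - 3) = 2 * k - 3),
      claim1 _ (le_refl _), zero_add] at h0
    exact (mul_eq_zero.1 h0).resolve_left hη
  have h22 : ∑ j, v j ^ 2 * α j ^ (2 * k - 2) = 0 := by
    have h0 := claim2 (k - 2) (by omega)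
    rw [(by omega : k - 1 + (k - 2) = 2 * k - 3), (by omega : k + (k - 2) = 2 * k - 2),
      h23, zero_add] at h0
    exact (mul_eq_zero.1 h0).resolve_left hη
  have hzero : ∀ m : ℕ, m ≤ 2 * k - 2 → ∑ j, v j ^ 2 * α j ^ m = 0 := by
    intro m hm
    rcases le_or_gt m (2 * k - 4) with h' | h'
    · exact claim1 m h'
    · rcases (by omega : m = 2 * k - 3 ∨ m = 2 * k - 2) with rfl | rfl
      · exact h23
      · exact h22
  -- dimension count forces n ≤ 2k - 1
  have hrange : ETGRS k n α v η = ↑(LinearMap.range (Phi k n α v η hk0)) :=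
    ETGRS_eq_range k n α v η hk0
  set W := LinearMap.range (Phi k n α v η hk0) with hWdef
  have hWeq : W = (dotForm F (n + 1)).orthogonal W :=
    SetLike.coe_injective (by rw [← hrange, h, hrange, dualCode_eq_orthogonal])
  have hfr := LinearMap.BilinForm.finrank_orthogonal (dotForm_nondeg) W
  rw [← hWeq] at hfr
  have hV : Module.finrank F (Fin (n + 1) → F) = n + 1 := by
    simp [Module.finrank_pi]
  have hWle : Module.finrank F W ≤ k :=
    (LinearMap.finrank_range_le _).trans (by simp [Module.finrank_pi])
  have hWle' : Module.finrank F W ≤ n + 1 := by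
    have h2 := Submodule.finrank_le W
    rwa [hV] at h2
  have hnk : n ≤ 2 * k - 1 := by omega
  -- Vandermonde contradiction
  have hvz : (fun j => v j ^ 2) = 0 := by
    refine vandermonde_kill α hα _ (fun m => hzero m ?_)
    have := m.2
    omega
  have h00 := congrFun hvz ⟨0, by omega⟩
  simp only [Pi.zero_apply, pow_eq_zero_iff (by norm_num : 2 ≠ 0)] at h00
  exact hv _ h00
end
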